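/- arXiv:0906.5089 — 4 statements merged into one kernel-verified Lean document; each statement's English description precedes it below -/
import Mathlib

section
/- Let T1 and T2 be two unrooted phylogenetic trees chosen independently and uniformly at random (with replacement) from P(n), the set of all unrooted phylogenies over the taxon set [n]. Then for every p ∈ [0,1], the expected parametric quartet distance satisfies E(d^(p)(T1,T2)) = C(n,4) · ( (2/3)·r(n)^2 + 2·p·r(n)·u(n) ), where C(n,4) is the binomial coefficient 'n choose 4'. -/
open Finset

attribute [local instance] Classical.propDecidable

/-- An unrooted phylogenetic tree over the taxon set `Fin n`, encoded by its split
system: the collection of all sets of leaves lying on one side of some edge of the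
tree.  By the splits-equivalence (Buneman) theorem, the families satisfying these
conditions (all trivial splits present, closure under complementation, pairwise
compatibility) correspond exactly to unrooted phylogenies in which every internal
node has degree at least three. -/
structure UTree (n : ℕ) where
  splits : Finset (Finset (Fin n))
  empty_not_mem : ∅ ∉ splits
  trivial_mem : ∀ x : Fin n, ({x} : Finset (Fin n)) = Finset.univ ∨ {x} ∈ splits
  compl_mem : ∀ A ∈ splits, Finset.univ \ A ∈ splits
  compat : ∀ A ∈ splits, ∀ B ∈ splits, A ⊆ B ∨ B ⊆ A ∨ A ∩ B = ∅ ∨ A ∪ B = Finset.univ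

/-- All quartets (4-element subsets) of `Fin n`. -/
def quartets (n : ℕ) : Finset (Finset (Fin n)) :=
  Finset.powersetCard 4 Finset.univ

/-- The split system of the restriction `T|X`, for an unrooted tree with split
system `F`: the proper nonempty intersections of split sides with `X`. -/
noncomputable def famRestrictU {n : ℕ} (F : Finset (Finset (Fin n))) (X : Finset (Fin n)) :
    Finset (Finset (Fin n)) :=
  (F.image (· ∩ X)).filter fun A => A ≠ ∅ ∧ A ≠ X

/-- A quartet `X` is resolved in an unrooted tree with split system `F` iff the
restriction `T|X` is fully resolved, equivalently iff some split side contains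
exactly two of the four elements of `X`. -/
def famResolvedU {n : ℕ} (F : Finset (Finset (Fin n))) (X : Finset (Fin n)) : Prop :=
  ∃ A ∈ F, (A ∩ X).card = 2

/-- Quartets resolved, identically, in both trees. -/
noncomputable def famSetSU {n : ℕ} (F G : Finset (Finset (Fin n))) :
    Finset (Finset (Fin n)) :=
  (quartets n).filter fun X =>
    famResolvedU F X ∧ famResolvedU G X ∧ famRestrictU F X = famRestrictU G X

/-- Quartets resolved, differently, in both trees. -/
noncomputable def famSetDU {n : ℕ} (F G : Finset (Finset (Fin n))) :
    Finset (Finset (Fin n)) :=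
  (quartets n).filter fun X =>
    famResolvedU F X ∧ famResolvedU G X ∧ famRestrictU F X ≠ famRestrictU G X

/-- Quartets resolved in the first tree but not in the second. -/
noncomputable def famSetR1U {n : ℕ} (F G : Finset (Finset (Fin n))) :
    Finset (Finset (Fin n)) :=
  (quartets n).filter fun X => famResolvedU F X ∧ ¬ famResolvedU G X

/-- Quartets resolved in the second tree but not in the first. -/
noncomputable def famSetR2U {n : ℕ} (F G : Finset (Finset (Fin n))) :
    Finset (Finset (Fin n)) :=
  (quartets n).filter fun X => famResolvedU G X ∧ ¬ famResolvedU F X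

/-- Quartets unresolved in both trees. -/
noncomputable def famSetUU {n : ℕ} (F G : Finset (Finset (Fin n))) :
    Finset (Finset (Fin n)) :=
  (quartets n).filter fun X => ¬ famResolvedU F X ∧ ¬ famResolvedU G X

/-- The parametric quartet distance, at the level of split systems. -/
noncomputable def famPdistU {n : ℕ} (p : ℝ) (F G : Finset (Finset (Fin n))) : ℝ :=
  ((famSetDU F G).card : ℝ) +
    p * (((famSetR1U F G).card : ℝ) + ((famSetR2U F G).card : ℝ))

namespace UTree

variable {n : ℕ}

/-- The split system of the restriction `T|X`. -/
noncomputable def restrict (T : UTree n) (X : Finset (Fin n)) : Finset (Finset (Fin n)) :=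
  famRestrictU T.splits X

/-- The quartet `X` is resolved in `T`, i.e. `T|X` is fully resolved. -/
def Resolved (T : UTree n) (X : Finset (Fin n)) : Prop :=
  famResolvedU T.splits X

/-- An unrooted phylogeny is fully resolved (all internal nodes have degree exactly
three) iff every quartet is resolved in it. -/
def FullyResolved (T : UTree n) : Prop :=
  ∀ X ∈ quartets n, T.Resolved X

noncomputable def setS (T₁ T₂ : UTree n) : Finset (Finset (Fin n)) :=
  famSetSU T₁.splits T₂.splits

noncomputable def setD (T₁ T₂ : UTree n) : Finset (Finset (Fin n)) :=
  famSetDU T₁.splits T₂.splits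

noncomputable def setR1 (T₁ T₂ : UTree n) : Finset (Finset (Fin n)) :=
  famSetR1U T₁.splits T₂.splits

noncomputable def setR2 (T₁ T₂ : UTree n) : Finset (Finset (Fin n)) :=
  famSetR2U T₁.splits T₂.splits

noncomputable def setU (T₁ T₂ : UTree n) : Finset (Finset (Fin n)) :=
  famSetUU T₁.splits T₂.splits

/-- The parametric quartet distance `d⁽ᵖ⁾(T₁,T₂)`. -/
noncomputable def pdist (p : ℝ) (T₁ T₂ : UTree n) : ℝ :=
  famPdistU p T₁.splits T₂.splits

theorem splits_injective : Function.Injective (splits (n := n)) := by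
  rintro ⟨s₁, _, _, _, _⟩ ⟨s₂, _, _, _, _⟩ h
  simp only [mk.injEq] at h ⊢
  exact h

noncomputable instance : Fintype (UTree n) :=
  Fintype.ofInjective splits splits_injective

end UTree

/-- `r(n)` : the probability that the fixed quartet `X` is resolved in an unrooted
phylogeny chosen uniformly at random from `P(n)`.  (By symmetry this does not depend
on the choice of the quartet `X`.) -/
noncomputable def uResProb (n : ℕ) (X : Finset (Fin n)) : ℝ :=
  ((Finset.univ.filter fun T : UTree n => T.Resolved X).card : ℝ) /
    (Fintype.card (UTree n) : ℝ)

/-!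
By linearity of expectation the average distance is a sum over quartets, and relabelling the
taxa shows that every quartet contributes the same amount, so it suffices to count ordered
pairs of trees for one quartet `X`. If `r` trees resolve `X` and `u` do not, exactly `2 r u`
pairs resolve `X` in one tree only. Fixing `a ∈ X`, every resolved tree pairs `a` with one of
the three other taxa of `X`; these three classes are equinumerous (a transposition swaps
them) and two trees induce the same topology on `X` iff they lie in the same class. Hence
`r² / 3` of the `r²` pairs resolving `X` in both trees agree on it and `2 r² / 3` disagree.
-/

open scoped Pointwise

theorem Finset.exists_eq_pair_of_mem {α : Type*} [DecidableEq α] {s : Finset α} {a : α}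
    (hs : #s = 2) (ha : a ∈ s) : ∃ b ∈ s.erase a, s = {a, b} := by
  obtain ⟨b, hb⟩ := card_eq_one.1 (by rw [card_erase_of_mem ha, hs] : #(s.erase a) = 1)
  exact ⟨b, hb ▸ mem_singleton_self b, by rw [← insert_erase ha, hb]⟩

theorem Finset.eq_sdiff_of_disjoint {α : Type*} [DecidableEq α] {s t u : Finset α} (hts : t ⊆ s)
    (hut : Disjoint u t) (hcard : #(s \ u) ≤ #t) : t = s \ u :=
  eq_of_subset_of_card_le (subset_sdiff.2 ⟨hts, hut.symm⟩) hcard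

theorem Finset.swap_smul_eq_self {α : Type*} [DecidableEq α] {s : Finset α} {b c : α}
    (hb : b ∈ s) (hc : c ∈ s) : Equiv.swap b c • s = s := by
  ext x
  rw [← inv_smul_mem_iff, Equiv.swap_inv, Equiv.Perm.smul_def, Equiv.swap_apply_def]
  split_ifs <;> simp_all

theorem Finset.card_filter_prod_and {α β : Type*} [Fintype α] [Fintype β] (p : α → Prop)
    (q : β → Prop) [DecidablePred p] [DecidablePred q] :
    #{x : α × β | p x.1 ∧ q x.2} = #{a | p a} * #{b | q b} := by
  rw [← univ_product_univ, filter_product, card_product]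

theorem Finset.card_mul_card_biUnion_product_self {ι α : Type*} [DecidableEq α] {S : Finset ι}
    {C : ι → Finset α} (hC : (S : Set ι).PairwiseDisjoint C) {c : ℕ}
    (hc : ∀ i ∈ S, #(C i) = c) :
    #S * #(S.biUnion fun i => C i ×ˢ C i) = #(S.biUnion C) ^ 2 := by
  have hC' : (S : Set ι).PairwiseDisjoint fun i => C i ×ˢ C i :=
    fun i hi j hj hij => disjoint_product.2 (.inl (hC hi hj hij))
  rw [card_biUnion hC, card_biUnion hC', sum_congr rfl fun i hi => by rw [card_product, hc i hi],
    sum_congr rfl hc, sum_const, sum_const, smul_eq_mul, smul_eq_mul]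
  ring

theorem sum_card_filter_quartets {n : ℕ} {α : Type*} [Fintype α] (P : α → Finset (Fin n) → Prop)
    [∀ a Y, Decidable (P a Y)] {k : ℕ} (hk : ∀ Y ∈ quartets n, #{a | P a Y} = k) :
    ∑ a, #{Y ∈ quartets n | P a Y} = n.choose 4 * k := by
  calc ∑ a, #{Y ∈ quartets n | P a Y} = ∑ Y ∈ quartets n, #{a | P a Y} :=
        sum_card_bipartiteAbove_eq_sum_card_bipartiteBelow P
    _ = n.choose 4 * k := by
      rw [sum_congr rfl hk, sum_const, smul_eq_mul, quartets, card_powersetCard, card_univ,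
        Fintype.card_fin]

namespace UTree

variable {n : ℕ}

instance : MulAction (Equiv.Perm (Fin n)) (UTree n) where
  smul σ T :=
    { splits := σ • T.splits
      empty_not_mem := by
        rw [← smul_finset_empty σ, smul_mem_smul_finset_iff]
        exact T.empty_not_mem
      trivial_mem := fun x => by
        rw [← smul_inv_smul σ x, ← smul_finset_singleton, smul_finset_eq_univ,
          smul_mem_smul_finset_iff]
        exact T.trivial_mem _
      compl_mem := by
        intro _ h
        obtain ⟨A, hA, rfl⟩ := mem_smul_finset.1 h
        rw [← smul_finset_univ (a := σ), ← smul_finset_sdiff]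
        exact smul_mem_smul_finset (T.compl_mem A hA)
      compat := by
        intro _ hA' _ hB'
        obtain ⟨A, hA, rfl⟩ := mem_smul_finset.1 hA'
        obtain ⟨B, hB, rfl⟩ := mem_smul_finset.1 hB'
        simp only [smul_finset_subset_smul_finset_iff, ← smul_finset_inter,
          ← smul_finset_union, smul_finset_eq_empty, smul_finset_eq_univ]
        exact T.compat A hA B hB }
  one_smul T := splits_injective (one_smul _ T.splits)
  mul_smul σ τ T := splits_injective (mul_smul σ τ T.splits)

@[simp]
theorem smul_splits (σ : Equiv.Perm (Fin n)) (T : UTree n) : (σ • T).splits = σ • T.splits :=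
  rfl

section Restrict

variable {T : UTree n} {X A P Q : Finset (Fin n)} {a : Fin n}

theorem mem_restrict :
    A ∈ T.restrict X ↔ (∃ B ∈ T.splits, B ∩ X = A) ∧ A ≠ ∅ ∧ A ≠ X := by
  simp [restrict, famRestrictU]

theorem subset_of_mem_restrict (h : A ∈ T.restrict X) : A ⊆ X := by
  obtain ⟨⟨B, -, rfl⟩, -⟩ := mem_restrict.1 h
  exact inter_subset_right

theorem sdiff_mem_restrict (h : A ∈ T.restrict X) : X \ A ∈ T.restrict X := by
  have hAX := subset_of_mem_restrict h
  obtain ⟨⟨B, hB, rfl⟩, hne, hX⟩ := mem_restrict.1 h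
  refine mem_restrict.2
    ⟨⟨univ \ B, T.compl_mem B hB, by ext; simp; tauto⟩, fun h' => ?_, fun h' => ?_⟩
  · exact hX (hAX.antisymm (sdiff_eq_empty_iff_subset.1 h'))
  · exact hne ((Finset.sdiff_eq_self_iff_disjoint.1 h').symm.eq_bot_of_le hAX)

theorem singleton_mem_restrict (hX : 1 < #X) {x : Fin n} (hx : x ∈ X) :
    {x} ∈ T.restrict X := by
  have hn : 1 < n := hX.trans_le (by simpa using card_le_univ X)
  have hx' : {x} ∈ T.splits :=
    (T.trivial_mem x).resolve_left fun h => by simpa [hn.ne] using congrArg card h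
  refine mem_restrict.2 ⟨⟨{x}, hx', by simpa⟩, by simp, fun h => ?_⟩
  simp [← h] at hX

theorem resolved_iff_exists_card_two (hX : #X = 4) :
    T.Resolved X ↔ ∃ P ∈ T.restrict X, #P = 2 := by
  constructor
  · rintro ⟨B, hB, h2⟩
    refine ⟨B ∩ X, mem_restrict.2 ⟨⟨B, hB, rfl⟩, fun h => ?_, fun h => ?_⟩, h2⟩ <;>
      simp [h, hX] at h2
  · rintro ⟨P, hP, h2⟩
    obtain ⟨⟨B, hB, rfl⟩, -⟩ := mem_restrict.1 hP
    exact ⟨B, hB, h2⟩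

theorem eq_or_eq_sdiff_of_mem_restrict (hX : #X = 4) (hP : P ∈ T.restrict X) (hP2 : #P = 2)
    (hQ : Q ∈ T.restrict X) (hQ2 : #Q = 2) : Q = P ∨ Q = X \ P := by
  have hPX := subset_of_mem_restrict hP
  have hQX := subset_of_mem_restrict hQ
  have hcard : #(X \ P) ≤ #Q := by rw [card_sdiff_of_subset hPX]; omega
  obtain ⟨⟨B, hB, rfl⟩, -⟩ := mem_restrict.1 hP
  obtain ⟨⟨C, hC, rfl⟩, -⟩ := mem_restrict.1 hQ
  rcases T.compat B hB C hC with h | h | h | h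
  · exact .inl (eq_of_subset_of_card_le (inter_subset_inter_right h) (by omega)).symm
  · exact .inl (eq_of_subset_of_card_le (inter_subset_inter_right h) (by omega))
  · refine .inr (eq_sdiff_of_disjoint hQX ?_ hcard)
    rw [disjoint_iff_inter_eq_empty, inter_inter_inter_comm, h, empty_inter]
  · refine .inr (eq_sdiff_of_disjoint hQX ?_ hcard)
    have hunion : B ∩ X ∪ C ∩ X = X := by rw [← union_inter_distrib_right, h, univ_inter]
    have := card_union_add_card_inter (B ∩ X) (C ∩ X)
    rw [hunion] at this
    rw [disjoint_iff_inter_eq_empty, ← card_eq_zero]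
    omega

theorem mem_restrict_iff_of_mem_restrict (hX : #X = 4) (hP : P ∈ T.restrict X) (hP2 : #P = 2) :
    A ∈ T.restrict X ↔ A ⊆ X ∧ A ≠ ∅ ∧ A ≠ X ∧ (#A = 2 → A = P ∨ A = X \ P) := by
  refine ⟨fun hA => ⟨subset_of_mem_restrict hA, (mem_restrict.1 hA).2.1, (mem_restrict.1 hA).2.2,
    eq_or_eq_sdiff_of_mem_restrict hX hP hP2 hA⟩, fun ⟨hAX, hA0, hAX', hA2⟩ => ?_⟩
  have hcard : #A < 4 := hX ▸ card_lt_card (Finset.ssubset_iff_subset_ne.2 ⟨hAX, hAX'⟩)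
  have hpos : 0 < #A := card_pos.2 (nonempty_iff_ne_empty.2 hA0)
  interval_cases hA : #A
  · obtain ⟨x, rfl⟩ := card_eq_one.1 hA
    exact singleton_mem_restrict (by omega) (hAX (mem_singleton_self x))
  · obtain rfl | rfl := hA2 rfl
    exacts [hP, sdiff_mem_restrict hP]
  · obtain ⟨x, hx⟩ := card_eq_one.1 (show #(X \ A) = 1 by rw [card_sdiff_of_subset hAX]; omega)
    have hxX : x ∈ X := (mem_sdiff.1 (hx ▸ mem_singleton_self x)).1
    rw [← Finset.sdiff_sdiff_eq_self hAX, hx]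
    exact sdiff_mem_restrict (singleton_mem_restrict (by omega) hxX)

theorem restrict_eq_of_mem_restrict {T₁ T₂ : UTree n} (hX : #X = 4) (hP2 : #P = 2)
    (h₁ : P ∈ T₁.restrict X) (h₂ : P ∈ T₂.restrict X) : T₁.restrict X = T₂.restrict X := by
  ext A
  rw [mem_restrict_iff_of_mem_restrict hX h₁ hP2, mem_restrict_iff_of_mem_restrict hX h₂ hP2]

theorem resolved_iff_exists_pair_mem_restrict (hX : #X = 4) (ha : a ∈ X) :
    T.Resolved X ↔ ∃ b ∈ X.erase a, {a, b} ∈ T.restrict X := by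
  refine ⟨fun h => ?_, fun ⟨b, hb, h⟩ => ?_⟩
  · obtain ⟨P, hP, hP2, haP⟩ : ∃ P ∈ T.restrict X, #P = 2 ∧ a ∈ P := by
      obtain ⟨P, hP, hP2⟩ := (resolved_iff_exists_card_two hX).1 h
      by_cases haP : a ∈ P
      · exact ⟨P, hP, hP2, haP⟩
      · refine ⟨X \ P, sdiff_mem_restrict hP, ?_, mem_sdiff.2 ⟨ha, haP⟩⟩
        rw [card_sdiff_of_subset (subset_of_mem_restrict hP), hX, hP2]
    obtain ⟨b, hb, rfl⟩ := exists_eq_pair_of_mem hP2 haP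
    exact ⟨b, erase_subset_erase a (subset_of_mem_restrict hP) hb, hP⟩
  · exact (resolved_iff_exists_card_two hX).2 ⟨_, h, card_pair (ne_of_mem_erase hb).symm⟩

theorem eq_of_pair_mem_restrict (hX : #X = 4) {b c : Fin n} (hb : b ∈ X.erase a)
    (hc : c ∈ X.erase a) (hab : {a, b} ∈ T.restrict X) (hac : {a, c} ∈ T.restrict X) :
    b = c := by
  have hba := ne_of_mem_erase hb
  have hca := ne_of_mem_erase hc
  rcases eq_or_eq_sdiff_of_mem_restrict hX hab (card_pair hba.symm) hac (card_pair hca.symm)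
    with h | h
  · have : c ∈ ({a, b} : Finset (Fin n)) := h ▸ mem_insert_of_mem (mem_singleton_self c)
    simp only [mem_insert, mem_singleton] at this
    exact (this.resolve_left hca).symm
  · have : a ∈ X \ {a, b} := h ▸ mem_insert_self a {c}
    simp at this

end Restrict

section Relabel

variable (σ : Equiv.Perm (Fin n)) (T : UTree n) (X : Finset (Fin n))

theorem smul_mem_restrict_smul {A : Finset (Fin n)} :
    σ • A ∈ (σ • T).restrict (σ • X) ↔ A ∈ T.restrict X := by
  simp only [mem_restrict, smul_splits, smul_finset_def (a := σ) (s := T.splits),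
    exists_mem_image, ← smul_finset_inter, smul_left_cancel_iff, ne_eq, smul_finset_eq_empty]

theorem resolved_smul : (σ • T).Resolved (σ • X) ↔ T.Resolved X := by
  simp only [Resolved, famResolvedU, smul_splits, smul_finset_def (a := σ) (s := T.splits),
    exists_mem_image, ← smul_finset_inter, card_smul_finset]

theorem card_filter_resolved_smul :
    #{T : UTree n | T.Resolved (σ • X)} = #{T : UTree n | T.Resolved X} :=
  (card_equiv (MulAction.toPerm σ) fun T => by simp [resolved_smul]).symm

theorem card_filter_mem_restrict_smul (A : Finset (Fin n)) :
    #{T : UTree n | σ • A ∈ T.restrict (σ • X)} = #{T : UTree n | A ∈ T.restrict X} :=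
  (card_equiv (MulAction.toPerm σ) fun T => by simp [smul_mem_restrict_smul]).symm

end Relabel

theorem card_filter_resolved_eq_of_card_eq {X Y : Finset (Fin n)} (h : #X = #Y) :
    #{T : UTree n | T.Resolved X} = #{T : UTree n | T.Resolved Y} := by
  have := Set.powersetCard.isPretransitive (α := Fin n) (n := #X)
  obtain ⟨σ, hσ⟩ := MulAction.exists_smul_eq (Equiv.Perm (Fin n))
    (⟨X, rfl⟩ : Set.powersetCard (Fin n) #X) ⟨Y, h.symm⟩
  have hσY : σ • X = Y := by simpa using congrArg Subtype.val hσ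
  rw [← hσY, card_filter_resolved_smul]

variable {X : Finset (Fin n)} {a : Fin n}

theorem card_filter_pair_mem_restrict_eq {b c : Fin n} (hb : b ∈ X.erase a) (hc : c ∈ X.erase a) :
    #{T : UTree n | {a, b} ∈ T.restrict X} = #{T : UTree n | {a, c} ∈ T.restrict X} := by
  have hσ : Equiv.swap b c • ({a, b} : Finset (Fin n)) = {a, c} := by
    rw [smul_finset_insert, smul_finset_singleton, Equiv.Perm.smul_def, Equiv.Perm.smul_def,
      Equiv.swap_apply_of_ne_of_ne (ne_of_mem_erase hb).symm (ne_of_mem_erase hc).symm,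
      Equiv.swap_apply_left]
  rw [← card_filter_mem_restrict_smul (Equiv.swap b c) X, hσ,
    swap_smul_eq_self (mem_of_mem_erase hb) (mem_of_mem_erase hc)]

theorem three_mul_card_filter_restrict_eq (hX : #X = 4) :
    3 * #{q : UTree n × UTree n | q.1.Resolved X ∧ q.2.Resolved X ∧
        q.1.restrict X = q.2.restrict X} = #{T : UTree n | T.Resolved X} ^ 2 := by
  obtain ⟨a, ha⟩ := card_pos.1 (by omega : 0 < #X)
  have hS : #(X.erase a) = 3 := by rw [card_erase_of_mem ha, hX]
  obtain ⟨b₀, hb₀⟩ := card_pos.1 (by omega : 0 < #(X.erase a))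
  set C : Fin n → Finset (UTree n) := fun b => {T | {a, b} ∈ T.restrict X}
  have hC : (X.erase a : Set (Fin n)).PairwiseDisjoint C := fun b hb c hc hbc =>
    disjoint_left.2 fun T hTb hTc =>
      hbc (eq_of_pair_mem_restrict hX hb hc (mem_filter.1 hTb).2 (mem_filter.1 hTc).2)
  have hres : ({T : UTree n | T.Resolved X} : Finset _) = (X.erase a).biUnion C := by
    ext T
    simp only [C, mem_filter, mem_univ, true_and, mem_biUnion,
      resolved_iff_exists_pair_mem_restrict hX ha]
  have hpairs : ({q : UTree n × UTree n | q.1.Resolved X ∧ q.2.Resolved X ∧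
      q.1.restrict X = q.2.restrict X} : Finset _) = (X.erase a).biUnion fun b => C b ×ˢ C b := by
    ext ⟨T₁, T₂⟩
    simp only [C, mem_filter, mem_univ, true_and, mem_biUnion, mem_product,
      resolved_iff_exists_pair_mem_restrict hX ha]
    constructor
    · rintro ⟨⟨b, hb, h₁⟩, -, heq⟩
      exact ⟨b, hb, h₁, heq ▸ h₁⟩
    · rintro ⟨b, hb, h₁, h₂⟩
      exact ⟨⟨b, hb, h₁⟩, ⟨b, hb, h₂⟩,
        restrict_eq_of_mem_restrict hX (card_pair (ne_of_mem_erase hb).symm) h₁ h₂⟩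
  rw [hres, hpairs, ← hS]
  exact card_mul_card_biUnion_product_self hC fun b hb =>
    card_filter_pair_mem_restrict_eq hb hb₀

theorem three_mul_card_filter_restrict_ne (hX : #X = 4) :
    3 * #{q : UTree n × UTree n | q.1.Resolved X ∧ q.2.Resolved X ∧
        q.1.restrict X ≠ q.2.restrict X} = 2 * #{T : UTree n | T.Resolved X} ^ 2 := by
  have hsplit := card_filter_add_card_filter_not
    (s := {q : UTree n × UTree n | q.1.Resolved X ∧ q.2.Resolved X})
    (fun q => q.1.restrict X = q.2.restrict X)
  simp only [filter_filter, and_assoc] at hsplit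
  rw [card_filter_prod_and (Resolved · X) (Resolved · X)] at hsplit
  have := three_mul_card_filter_restrict_eq hX
  rw [sq] at this ⊢
  simp only [ne_eq]
  omega

theorem pdist_eq (p : ℝ) (T₁ T₂ : UTree n) :
    pdist p T₁ T₂ = #(T₁.setD T₂) + p * (#(T₁.setR1 T₂) + #(T₁.setR2 T₂)) :=
  rfl

theorem setD_eq_filter (T₁ T₂ : UTree n) :
    T₁.setD T₂ =
      {Y ∈ quartets n | T₁.Resolved Y ∧ T₂.Resolved Y ∧ T₁.restrict Y ≠ T₂.restrict Y} :=
  rfl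

theorem setR1_eq_filter (T₁ T₂ : UTree n) :
    T₁.setR1 T₂ = {Y ∈ quartets n | T₁.Resolved Y ∧ ¬T₂.Resolved Y} :=
  rfl

theorem setR2_eq_setR1 (T₁ T₂ : UTree n) : T₁.setR2 T₂ = T₂.setR1 T₁ :=
  rfl

theorem three_mul_sum_card_setD (hX : #X = 4) :
    3 * ∑ T₁ : UTree n, ∑ T₂ : UTree n, #(T₁.setD T₂) =
      n.choose 4 * (2 * #{T : UTree n | T.Resolved X} ^ 2) := by
  have key : ∀ Y ∈ quartets n, #{q : UTree n × UTree n | q.1.Resolved Y ∧ q.2.Resolved Y ∧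
      q.1.restrict Y ≠ q.2.restrict Y} = #{q : UTree n × UTree n | q.1.Resolved X ∧
      q.2.Resolved X ∧ q.1.restrict X ≠ q.2.restrict X} := fun Y hY => by
    have hY : #Y = 4 := (mem_powersetCard.1 hY).2
    have hY' := three_mul_card_filter_restrict_ne hY
    rw [card_filter_resolved_eq_of_card_eq (hY.trans hX.symm),
      ← three_mul_card_filter_restrict_ne hX] at hY'
    omega
  rw [← Fintype.sum_prod_type']
  simp only [setD_eq_filter]
  rw [sum_card_filter_quartets _ key, mul_left_comm, three_mul_card_filter_restrict_ne hX]

theorem sum_card_setR1 (hX : #X = 4) :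
    ∑ T₁ : UTree n, ∑ T₂ : UTree n, #(T₁.setR1 T₂) =
      n.choose 4 * (#{T : UTree n | T.Resolved X} * #{T : UTree n | ¬T.Resolved X}) := by
  have key : ∀ Y ∈ quartets n, #{q : UTree n × UTree n | q.1.Resolved Y ∧ ¬q.2.Resolved Y} =
      #{T : UTree n | T.Resolved X} * #{T : UTree n | ¬T.Resolved X} := fun Y hY => by
    have hres := card_filter_resolved_eq_of_card_eq ((mem_powersetCard.1 hY).2.trans hX.symm)
    have hsplitY := card_filter_add_card_filter_not (s := univ) fun T : UTree n => T.Resolved Y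
    have hsplitX := card_filter_add_card_filter_not (s := univ) fun T : UTree n => T.Resolved X
    rw [card_filter_prod_and (Resolved · Y) (¬Resolved · Y), hres]
    congr 1
    omega
  rw [← Fintype.sum_prod_type']
  simp only [setR1_eq_filter]
  exact sum_card_filter_quartets _ key

end UTree

theorem expected_parametric_quartet_distance_general (n : ℕ)
    (p : ℝ)
    (X : Finset (Fin n)) (hX : X.card = 4) :
    (∑ T₁ : UTree n, ∑ T₂ : UTree n, UTree.pdist p T₁ T₂) /
        (Fintype.card (UTree n) : ℝ) ^ 2 =
      (n.choose 4 : ℝ) *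
        (2 / 3 * uResProb n X ^ 2 +
          2 * p * uResProb n X * (1 - uResProb n X)) := by
  rw [uResProb]
  set r := #{T : UTree n | T.Resolved X}
  set u := #{T : UTree n | ¬T.Resolved X}
  have hN : r + u = Fintype.card (UTree n) := card_filter_add_card_filter_not _
  have hD : ∑ T₁ : UTree n, ∑ T₂ : UTree n, (#(T₁.setD T₂) : ℝ) =
      n.choose 4 * (2 * r ^ 2) / 3 := by
    rw [eq_div_iff three_ne_zero, mul_comm]
    exact_mod_cast UTree.three_mul_sum_card_setD hX
  have hR : ∑ T₁ : UTree n, ∑ T₂ : UTree n, (#(T₁.setR1 T₂) : ℝ) = n.choose 4 * (r * u) :=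
    mod_cast UTree.sum_card_setR1 hX
  have hsum : ∑ T₁ : UTree n, ∑ T₂ : UTree n, UTree.pdist p T₁ T₂ =
      ∑ T₁ : UTree n, ∑ T₂ : UTree n, (#(T₁.setD T₂) : ℝ) +
        p * (2 * ∑ T₁ : UTree n, ∑ T₂ : UTree n, (#(T₁.setR1 T₂) : ℝ)) := by
    simp only [UTree.pdist_eq, UTree.setR2_eq_setR1, sum_add_distrib, ← mul_sum]
    rw [sum_comm (f := fun T₁ T₂ : UTree n => (#(T₂.setR1 T₁) : ℝ))]
    ring
  rw [hsum, hD, hR, ← hN]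
  push_cast
  rcases eq_or_ne ((r : ℝ) + u) 0 with h0 | h0
  · have hr : r = 0 := by
      have : r + u = 0 := by exact_mod_cast h0
      omega
    simp [hr]
  · field_simp
    ring

/-- **Theorem (expected parametric quartet distance).**  For `T₁`, `T₂` chosen
independently and uniformly at random from `P(n)` and any `p ∈ [0,1]`,
`E(d⁽ᵖ⁾(T₁,T₂)) = C(n,4) · ( (2/3)·r(n)² + 2·p·r(n)·u(n) )`, where `u(n) = 1 - r(n)`.
The expectation is written out as the average over all ordered pairs of trees. -/
theorem expected_parametric_quartet_distance (n : ℕ) (hn : 4 ≤ n)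
    (p : ℝ) (hp0 : 0 ≤ p) (hp1 : p ≤ 1)
    (X : Finset (Fin n)) (hX : X.card = 4) :
    (∑ T₁ : UTree n, ∑ T₂ : UTree n, UTree.pdist p T₁ T₂) /
        (Fintype.card (UTree n) : ℝ) ^ 2 =
      (n.choose 4 : ℝ) *
        (2 / 3 * uResProb n X ^ 2 +
          2 * p * uResProb n X * (1 - uResProb n X)) :=
  expected_parametric_quartet_distance_general n p X hX
end

section
/- Let T1 and T2 be two rooted phylogenetic trees chosen independently and uniformly at random (with replacement) from RP(n), the set of all rooted phylogenies over the taxon set [n]. Then for every p ∈ [0,1], E(d^(p)(T1,T2)) = C(n,3) · ( (2/3)·r'(n)^2 + 2·p·r'(n)·u'(n) ), where C(n,3) is 'n choose 3'. -/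
open Finset

attribute [local instance] Classical.propDecidable

/-- A rooted phylogenetic tree over the taxon set `Fin n`, encoded by its hierarchy of
clusters: for each node of the tree, the set of leaves descending from that node.
The conditions say that the whole leaf set and all singletons are clusters, the empty
set is not a cluster, and that the family is laminar.  Such families correspond exactly
to rooted phylogenies in which every internal node has at least two children. -/
structure RTree (n : ℕ) where
  clusters : Finset (Finset (Fin n))
  univ_mem : Finset.univ ∈ clusters
  singleton_mem : ∀ x : Fin n, {x} ∈ clusters
  empty_not_mem : ∅ ∉ clusters
  laminar : ∀ C ∈ clusters, ∀ D ∈ clusters, C ⊆ D ∨ D ⊆ C ∨ C ∩ D = ∅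

/-- All triplets (3-element subsets) of `Fin n`. -/
def triplets (n : ℕ) : Finset (Finset (Fin n)) :=
  Finset.powersetCard 3 Finset.univ

/-- The cluster family of the restriction `T|X`, for a rooted tree with cluster
family `F`: the nonempty intersections of clusters with `X`. -/
noncomputable def famRestrict {n : ℕ} (F : Finset (Finset (Fin n))) (X : Finset (Fin n)) :
    Finset (Finset (Fin n)) :=
  (F.image (· ∩ X)).filter (· ≠ ∅)

/-- A triplet `X` is resolved in a rooted tree with cluster family `F` iff the
restriction `T|X` is fully resolved, equivalently iff some cluster contains exactly
two of the three elements of `X`. -/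
def famResolved {n : ℕ} (F : Finset (Finset (Fin n))) (X : Finset (Fin n)) : Prop :=
  ∃ C ∈ F, (C ∩ X).card = 2

/-- Triplets resolved, identically, in both trees. -/
noncomputable def famSetS {n : ℕ} (F G : Finset (Finset (Fin n))) :
    Finset (Finset (Fin n)) :=
  (triplets n).filter fun X =>
    famResolved F X ∧ famResolved G X ∧ famRestrict F X = famRestrict G X

/-- Triplets resolved, differently, in both trees. -/
noncomputable def famSetD {n : ℕ} (F G : Finset (Finset (Fin n))) :
    Finset (Finset (Fin n)) :=
  (triplets n).filter fun X =>
    famResolved F X ∧ famResolved G X ∧ famRestrict F X ≠ famRestrict G X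

/-- Triplets resolved in the first tree but not in the second. -/
noncomputable def famSetR1 {n : ℕ} (F G : Finset (Finset (Fin n))) :
    Finset (Finset (Fin n)) :=
  (triplets n).filter fun X => famResolved F X ∧ ¬ famResolved G X

/-- Triplets resolved in the second tree but not in the first. -/
noncomputable def famSetR2 {n : ℕ} (F G : Finset (Finset (Fin n))) :
    Finset (Finset (Fin n)) :=
  (triplets n).filter fun X => famResolved G X ∧ ¬ famResolved F X

/-- Triplets unresolved in both trees. -/
noncomputable def famSetU {n : ℕ} (F G : Finset (Finset (Fin n))) :
    Finset (Finset (Fin n)) :=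
  (triplets n).filter fun X => ¬ famResolved F X ∧ ¬ famResolved G X

/-- The parametric triplet distance, at the level of cluster families. -/
noncomputable def famPdist {n : ℕ} (p : ℝ) (F G : Finset (Finset (Fin n))) : ℝ :=
  ((famSetD F G).card : ℝ) +
    p * (((famSetR1 F G).card : ℝ) + ((famSetR2 F G).card : ℝ))

namespace RTree

variable {n : ℕ}

/-- The cluster family of the restriction `T|X`. -/
noncomputable def restrict (T : RTree n) (X : Finset (Fin n)) : Finset (Finset (Fin n)) :=
  famRestrict T.clusters X

/-- The triplet `X` is resolved in `T`, i.e. `T|X` is fully resolved. -/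
def Resolved (T : RTree n) (X : Finset (Fin n)) : Prop :=
  famResolved T.clusters X

/-- A rooted phylogeny is fully resolved (all internal nodes have exactly two
children) iff every triplet is resolved in it. -/
def FullyResolved (T : RTree n) : Prop :=
  ∀ X ∈ triplets n, T.Resolved X

noncomputable def setS (T₁ T₂ : RTree n) : Finset (Finset (Fin n)) :=
  famSetS T₁.clusters T₂.clusters

noncomputable def setD (T₁ T₂ : RTree n) : Finset (Finset (Fin n)) :=
  famSetD T₁.clusters T₂.clusters

noncomputable def setR1 (T₁ T₂ : RTree n) : Finset (Finset (Fin n)) :=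
  famSetR1 T₁.clusters T₂.clusters

noncomputable def setR2 (T₁ T₂ : RTree n) : Finset (Finset (Fin n)) :=
  famSetR2 T₁.clusters T₂.clusters

noncomputable def setU (T₁ T₂ : RTree n) : Finset (Finset (Fin n)) :=
  famSetU T₁.clusters T₂.clusters

/-- The parametric triplet distance `d⁽ᵖ⁾(T₁,T₂)`. -/
noncomputable def pdist (p : ℝ) (T₁ T₂ : RTree n) : ℝ :=
  famPdist p T₁.clusters T₂.clusters

theorem clusters_injective : Function.Injective (clusters (n := n)) := by
  rintro ⟨s₁, _, _, _, _⟩ ⟨s₂, _, _, _, _⟩ h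
  simp only [mk.injEq] at h ⊢
  exact h

noncomputable instance : Fintype (RTree n) :=
  Fintype.ofInjective clusters clusters_injective

end RTree

/-- `r'(n)` : the probability that the fixed triplet `X` is resolved in a rooted
phylogeny chosen uniformly at random from `RP(n)`.  (By symmetry this does not
depend on the choice of the triplet `X`.) -/
noncomputable def rResProb (n : ℕ) (X : Finset (Fin n)) : ℝ :=
  ((Finset.univ.filter fun T : RTree n => T.Resolved X).card : ℝ) /
    (Fintype.card (RTree n) : ℝ)

/-!
By linearity of expectation, the expected distance is a sum over the `C(n,3)` triplets of the
probabilities that a triplet lies in `D`, `R1` or `R2`. Fix a triplet `X`. By laminarity a tree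
resolves `X` through exactly one pair `P ⊆ X` cut out by a cluster, and two resolved restrictions
agree iff they come from the same pair. Relabelling the leaves by a transposition of `X` shows
that all three pairs are chosen by equally many trees, so two independent trees resolve `X`
differently with probability `(2/3) r'²`, and exactly one of them resolves it with probability
`2 r' u'`. Relabelling also shows that `r'` does not depend on `X`.
-/

open scoped Pointwise

lemma Equiv.Perm.exists_smul_eq_self_and_smul_eq {α : Type*} [DecidableEq α] {X P Q : Finset α}
    (hP : P ⊆ X) (hQ : Q ⊆ X) (hPX : #P + 1 = #X) (hQX : #Q + 1 = #X) :
    ∃ σ : Equiv.Perm α, σ • X = X ∧ σ • P = Q := by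
  obtain ⟨a, ha⟩ := card_eq_one.1 (show #(X \ P) = 1 by rw [card_sdiff_of_subset hP]; omega)
  obtain ⟨b, hb⟩ := card_eq_one.1 (show #(X \ Q) = 1 by rw [card_sdiff_of_subset hQ]; omega)
  have haX : a ∈ X := (mem_sdiff.1 (ha ▸ mem_singleton_self a)).1
  have hbX : b ∈ X := (mem_sdiff.1 (hb ▸ mem_singleton_self b)).1
  have hσX : swap a b • X = X := by
    refine eq_of_subset_of_card_le (fun y hy => ?_) (card_smul_finset _ X).ge
    obtain ⟨x, hx, rfl⟩ := mem_smul_finset.1 hy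
    rw [Perm.smul_def, swap_apply_def]
    split_ifs <;> assumption
  refine ⟨swap a b, hσX, ?_⟩
  rw [← Finset.sdiff_sdiff_eq_self hP, ← Finset.sdiff_sdiff_eq_self hQ, ha, hb,
    smul_finset_sdiff, hσX, smul_finset_singleton, Perm.smul_def, swap_apply_left]

lemma Equiv.Perm.exists_smul_finset_eq {α : Type*} [DecidableEq α] {X Y : Finset α}
    (h : #X = #Y) : ∃ σ : Equiv.Perm α, σ • X = Y := by
  have := Set.powersetCard.isPretransitive (α := α) (n := #X)
  obtain ⟨σ, hσ⟩ := MulAction.exists_smul_eq (Equiv.Perm α)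
    (⟨X, rfl⟩ : Set.powersetCard α #X) ⟨Y, h.symm⟩
  exact ⟨σ, congrArg Subtype.val hσ⟩

lemma Finset.card_filter_exists_eq_sum {α ι : Type*} [Fintype α] {s : Finset ι}
    {c : α → ι → Prop} [∀ a i, Decidable (c a i)]
    (hc : ∀ a, ∀ i ∈ s, ∀ j ∈ s, c a i → c a j → i = j) :
    #{a | ∃ i ∈ s, c a i} = ∑ i ∈ s, #{a | c a i} := by
  rw [← card_biUnion]
  · congr 1
    ext a
    simp
  · intro i hi j hj hij
    exact disjoint_left.2 fun a hai haj =>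
      hij (hc a i hi j hj (mem_filter.1 hai).2 (mem_filter.1 haj).2)

lemma Finset.card_filter_fst_and_snd_eq_sq {α : Type*} [Fintype α] (q : α → Prop) :
    #{x : α × α | q x.1 ∧ q x.2} = #{a | q a} ^ 2 := by
  rw [sq, ← card_product, ← filter_product, univ_product_univ]

lemma Finset.sum_sum_card_eq_sum_card_filter_mem {α β : Type*} [Fintype α] [DecidableEq β]
    (s : Finset β) (f : α → α → Finset β) (hf : ∀ a b, f a b ⊆ s) :
    ∑ a, ∑ b, (#(f a b) : ℝ) = ∑ x ∈ s, (#{q : α × α | x ∈ f q.1 q.2} : ℝ) := by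
  have h := sum_card_bipartiteAbove_eq_sum_card_bipartiteBelow (s := (univ : Finset (α × α)))
    (t := s) (fun q x => x ∈ f q.1 q.2)
  simp only [bipartiteAbove, bipartiteBelow, filter_mem_eq_inter, inter_eq_right.2 (hf _ _)] at h
  rw [← Fintype.sum_prod_type']
  exact_mod_cast h

namespace RTree

variable {n : ℕ} {T T₁ T₂ : RTree n} {X Y P Q S : Finset (Fin n)}

lemma mem_restrict : S ∈ T.restrict X ↔ S ≠ ∅ ∧ ∃ C ∈ T.clusters, C ∩ X = S := by
  simp only [restrict, famRestrict, mem_filter, mem_image]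
  exact and_comm

lemma resolved_iff_exists_mem_restrict :
    T.Resolved X ↔ ∃ P ∈ X.powersetCard 2, P ∈ T.restrict X := by
  simp only [Resolved, famResolved, mem_restrict, mem_powersetCard]
  constructor
  · rintro ⟨C, hC, h2⟩
    exact ⟨C ∩ X, ⟨inter_subset_right, h2⟩, by simp [← card_eq_zero, h2], C, hC, rfl⟩
  · rintro ⟨_, ⟨-, h2⟩, -, C, hC, rfl⟩
    exact ⟨C, hC, h2⟩

lemma eq_of_mem_restrict (hX : #X = 3) (hP : P ∈ X.powersetCard 2) (hQ : Q ∈ X.powersetCard 2)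
    (hPT : P ∈ T.restrict X) (hQT : Q ∈ T.restrict X) : P = Q := by
  obtain ⟨-, C, hC, rfl⟩ := mem_restrict.1 hPT
  obtain ⟨-, D, hD, rfl⟩ := mem_restrict.1 hQT
  rw [mem_powersetCard] at hP hQ
  rcases T.laminar C hC D hD with h | h | h
  · exact eq_of_subset_of_card_le (inter_subset_inter_right h) (by omega)
  · exact (eq_of_subset_of_card_le (inter_subset_inter_right h) (by omega)).symm
  · -- disjoint clusters would cut four distinct elements out of `X`
    have hdisj : Disjoint (C ∩ X) (D ∩ X) :=
      disjoint_of_subset_left inter_subset_left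
        (disjoint_of_subset_right inter_subset_left (disjoint_iff_inter_eq_empty.2 h))
    have := card_le_card (union_subset hP.1 hQ.1)
    rw [card_union_of_disjoint hdisj] at this
    omega

lemma mem_restrict_of_card_ne_two (hX : #X = 3) (hSX : S ⊆ X) (hS : S.Nonempty)
    (h2 : #S ≠ 2) : S ∈ T.restrict X := by
  refine mem_restrict.2 ⟨hS.ne_empty, ?_⟩
  have := card_le_card hSX
  have := hS.card_pos
  obtain hS1 | hS3 : #S = 1 ∨ #S = 3 := by omega
  · obtain ⟨x, rfl⟩ := card_eq_one.1 hS1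
    exact ⟨{x}, T.singleton_mem x, singleton_inter_of_mem (singleton_subset_iff.1 hSX)⟩
  · exact ⟨univ, T.univ_mem, by rw [univ_inter, eq_of_subset_of_card_le hSX (by omega)]⟩

lemma restrict_eq_restrict_iff (hX : #X = 3) :
    T₁.restrict X = T₂.restrict X ↔
      ∀ P ∈ X.powersetCard 2, P ∈ T₁.restrict X ↔ P ∈ T₂.restrict X := by
  refine ⟨fun h P _ => by rw [h], fun h => ?_⟩
  have key : ∀ {T T' : RTree n},
      (∀ P ∈ X.powersetCard 2, P ∈ T.restrict X → P ∈ T'.restrict X) →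
        T.restrict X ⊆ T'.restrict X := by
    intro T T' h S hS
    obtain ⟨hS0, C, -, rfl⟩ := mem_restrict.1 hS
    by_cases h2 : #(C ∩ X) = 2
    · exact h _ (mem_powersetCard.2 ⟨inter_subset_right, h2⟩) hS
    · exact mem_restrict_of_card_ne_two hX inter_subset_right
        (nonempty_iff_ne_empty.2 hS0) h2
  exact Subset.antisymm (key fun P hP => (h P hP).1) (key fun P hP => (h P hP).2)

lemma resolved_and_resolved_and_restrict_eq_iff (hX : #X = 3) :
    T₁.Resolved X ∧ T₂.Resolved X ∧ T₁.restrict X = T₂.restrict X ↔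
      ∃ P ∈ X.powersetCard 2, P ∈ T₁.restrict X ∧ P ∈ T₂.restrict X := by
  simp only [resolved_iff_exists_mem_restrict]
  constructor
  · rintro ⟨⟨P, hP, hP₁⟩, -, heq⟩
    exact ⟨P, hP, hP₁, heq ▸ hP₁⟩
  · rintro ⟨P, hP, hP₁, hP₂⟩
    refine ⟨⟨P, hP, hP₁⟩, ⟨P, hP, hP₂⟩, (restrict_eq_restrict_iff hX).2 fun Q hQ => ⟨?_, ?_⟩⟩
    exacts [fun hQ₁ => eq_of_mem_restrict hX hP hQ hP₁ hQ₁ ▸ hP₂,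
      fun hQ₂ => eq_of_mem_restrict hX hP hQ hP₂ hQ₂ ▸ hP₁]

instance : MulAction (Equiv.Perm (Fin n)) (RTree n) where
  smul σ T :=
    { clusters := σ • T.clusters
      univ_mem := by simpa using smul_mem_smul_finset (a := σ) T.univ_mem
      singleton_mem := fun x => by
        simpa using smul_mem_smul_finset (a := σ) (T.singleton_mem (σ⁻¹ x))
      empty_not_mem := by
        rw [← inv_smul_mem_iff, smul_finset_empty]
        exact T.empty_not_mem
      laminar := by
        simp only [smul_finset_def (s := T.clusters), forall_mem_image, ← smul_finset_inter,
          smul_finset_subset_smul_finset_iff, smul_finset_eq_empty]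
        exact T.laminar }
  one_smul T := clusters_injective (one_smul _ T.clusters)
  mul_smul σ τ T := clusters_injective (mul_smul σ τ T.clusters)

lemma clusters_smul (σ : Equiv.Perm (Fin n)) : (σ • T).clusters = σ • T.clusters := rfl

lemma smul_mem_restrict_smul_iff (σ : Equiv.Perm (Fin n)) :
    σ • P ∈ (σ • T).restrict (σ • X) ↔ P ∈ T.restrict X := by
  simp only [mem_restrict, clusters_smul, smul_finset_def (s := T.clusters), exists_mem_image,
    ← smul_finset_inter, ne_eq, smul_finset_eq_empty, smul_left_cancel_iff]

lemma resolved_smul_iff (σ : Equiv.Perm (Fin n)) :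
    (σ • T).Resolved (σ • X) ↔ T.Resolved X := by
  simp only [Resolved, famResolved, clusters_smul, smul_finset_def (s := T.clusters),
    exists_mem_image, ← smul_finset_inter, card_smul_finset]

lemma card_filter_smul (σ : Equiv.Perm (Fin n)) (q : RTree n → Prop) [DecidablePred q] :
    #{T : RTree n | q (σ • T)} = #{T : RTree n | q T} :=
  card_equiv (MulAction.toPerm σ) (by simp)

lemma card_filter_mem_restrict_eq (hX : #X = 3) (hP : P ∈ X.powersetCard 2)
    (hQ : Q ∈ X.powersetCard 2) :
    #{T : RTree n | P ∈ T.restrict X} = #{T : RTree n | Q ∈ T.restrict X} := by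
  rw [mem_powersetCard] at hP hQ
  obtain ⟨σ, hσX, hσP⟩ :=
    Equiv.Perm.exists_smul_eq_self_and_smul_eq hP.1 hQ.1 (by omega) (by omega)
  refine Eq.trans ?_ (card_filter_smul σ fun T => Q ∈ T.restrict X)
  congr 1
  refine filter_congr fun T _ => ?_
  rw [← smul_mem_restrict_smul_iff σ, hσX, hσP]

lemma card_filter_resolved_eq (h : #X = #Y) :
    #{T : RTree n | T.Resolved X} = #{T : RTree n | T.Resolved Y} := by
  obtain ⟨σ, rfl⟩ := Equiv.Perm.exists_smul_finset_eq h
  refine Eq.trans ?_ (card_filter_smul σ fun T => T.Resolved (σ • X))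
  congr 1
  exact filter_congr fun T _ => (resolved_smul_iff σ).symm

lemma card_filter_resolved_eq_three_mul (hX : #X = 3) (hP : P ∈ X.powersetCard 2) :
    #{T : RTree n | T.Resolved X} = 3 * #{T : RTree n | P ∈ T.restrict X} :=
  calc #{T : RTree n | T.Resolved X}
      = #{T : RTree n | ∃ Q ∈ X.powersetCard 2, Q ∈ T.restrict X} := by
        rw [filter_congr fun T _ => resolved_iff_exists_mem_restrict]
    _ = ∑ Q ∈ X.powersetCard 2, #{T : RTree n | Q ∈ T.restrict X} :=
        card_filter_exists_eq_sum fun T Q hQ Q' hQ' => eq_of_mem_restrict hX hQ hQ'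
    _ = ∑ Q ∈ X.powersetCard 2, #{T : RTree n | P ∈ T.restrict X} :=
        sum_congr rfl fun Q hQ => card_filter_mem_restrict_eq hX hQ hP
    _ = 3 * #{T : RTree n | P ∈ T.restrict X} := by
        rw [sum_const, card_powersetCard, hX, smul_eq_mul, show Nat.choose 3 2 = 3 from rfl]

lemma card_filter_resolved_resolved_restrict_eq (hX : #X = 3) (hP : P ∈ X.powersetCard 2) :
    #{q : RTree n × RTree n |
        q.1.Resolved X ∧ q.2.Resolved X ∧ q.1.restrict X = q.2.restrict X} =
      3 * #{T : RTree n | P ∈ T.restrict X} ^ 2 :=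
  calc _ = #{q : RTree n × RTree n |
        ∃ Q ∈ X.powersetCard 2, Q ∈ q.1.restrict X ∧ Q ∈ q.2.restrict X} := by
        rw [filter_congr fun q _ => resolved_and_resolved_and_restrict_eq_iff hX]
    _ = ∑ Q ∈ X.powersetCard 2,
          #{q : RTree n × RTree n | Q ∈ q.1.restrict X ∧ Q ∈ q.2.restrict X} :=
        card_filter_exists_eq_sum fun q Q hQ Q' hQ' h h' =>
          eq_of_mem_restrict hX hQ hQ' h.1 h'.1
    _ = ∑ Q ∈ X.powersetCard 2, #{T : RTree n | P ∈ T.restrict X} ^ 2 :=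
        sum_congr rfl fun Q hQ => by
          rw [← card_filter_mem_restrict_eq hX hQ hP]
          convert card_filter_fst_and_snd_eq_sq fun T : RTree n => Q ∈ T.restrict X
    _ = 3 * #{T : RTree n | P ∈ T.restrict X} ^ 2 := by
        rw [sum_const, card_powersetCard, hX, smul_eq_mul, show Nat.choose 3 2 = 3 from rfl]

lemma three_mul_card_filter_mem_setD (hX : X ∈ triplets n) :
    3 * #{q : RTree n × RTree n | X ∈ q.1.setD q.2} = 2 * #{T : RTree n | T.Resolved X} ^ 2 := by
  have hX3 : #X = 3 := (mem_powersetCard.1 hX).2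
  obtain ⟨P, hP⟩ : (X.powersetCard 2).Nonempty := powersetCard_nonempty.2 (by omega)
  have hsplit := card_filter_add_card_filter_not
    (s := {q : RTree n × RTree n | q.1.Resolved X ∧ q.2.Resolved X})
    (fun q => q.1.restrict X = q.2.restrict X)
  simp only [filter_filter, and_assoc] at hsplit
  rw [card_filter_fst_and_snd_eq_sq fun T : RTree n => T.Resolved X,
    card_filter_resolved_resolved_restrict_eq hX3 hP, card_filter_resolved_eq_three_mul hX3 hP]
    at hsplit
  have hD : #{q : RTree n × RTree n | X ∈ q.1.setD q.2} =
      #{q : RTree n × RTree n |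
        q.1.Resolved X ∧ q.2.Resolved X ∧ ¬ q.1.restrict X = q.2.restrict X} := by
    congr 1
    ext q
    simp only [setD, famSetD, mem_filter, mem_univ, hX, true_and]
    rfl
  rw [hD, card_filter_resolved_eq_three_mul hX3 hP]
  nlinarith

lemma card_filter_mem_setR1 (hX : X ∈ triplets n) :
    #{q : RTree n × RTree n | X ∈ q.1.setR1 q.2} =
      #{T : RTree n | T.Resolved X} * #{T : RTree n | ¬ T.Resolved X} := by
  rw [← card_product, ← filter_product, univ_product_univ]
  congr 1
  exact filter_congr fun q _ => by simp only [setR1, famSetR1, mem_filter, hX, true_and]; rfl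

lemma card_filter_mem_setD_add_two_mul_card_filter_mem_setR1 (hX : X ∈ triplets n) (p : ℝ) :
    (#{q : RTree n × RTree n | X ∈ q.1.setD q.2} : ℝ) +
        2 * p * #{q : RTree n × RTree n | X ∈ q.1.setR1 q.2} =
      2 / 3 * (#{T : RTree n | T.Resolved X} : ℝ) ^ 2 +
        2 * p * #{T : RTree n | T.Resolved X} *
          (Fintype.card (RTree n) - #{T : RTree n | T.Resolved X}) := by
  have hD : (3 : ℝ) * #{q : RTree n × RTree n | X ∈ q.1.setD q.2} =
      2 * (#{T : RTree n | T.Resolved X} : ℝ) ^ 2 := by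
    exact_mod_cast three_mul_card_filter_mem_setD hX
  have hN : (#{T : RTree n | T.Resolved X} : ℝ) + #{T : RTree n | ¬ T.Resolved X} =
      Fintype.card (RTree n) := by
    exact_mod_cast card_filter_add_card_filter_not (s := univ) fun T : RTree n => T.Resolved X
  rw [card_filter_mem_setR1 hX, ← hN]
  push_cast
  linear_combination hD / 3

lemma pdist_eq (p : ℝ) (T₁ T₂ : RTree n) :
    pdist p T₁ T₂ = #(T₁.setD T₂) + p * (#(T₁.setR1 T₂) + #(T₁.setR2 T₂)) := rfl

lemma sum_sum_pdist_eq_sum_triplets (p : ℝ) :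
    ∑ T₁ : RTree n, ∑ T₂ : RTree n, pdist p T₁ T₂ =
      ∑ X ∈ triplets n, ((#{q : RTree n × RTree n | X ∈ q.1.setD q.2} : ℝ) +
        2 * p * #{q : RTree n × RTree n | X ∈ q.1.setR1 q.2}) := by
  -- `T₁.setR2 T₂` unfolds to `T₂.setR1 T₁`, so swapping the two sums identifies the totals.
  have hR : ∑ T₁ : RTree n, ∑ T₂ : RTree n, (#(T₁.setR2 T₂) : ℝ) =
      ∑ T₁ : RTree n, ∑ T₂ : RTree n, (#(T₁.setR1 T₂) : ℝ) := sum_comm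
  simp only [pdist_eq, sum_add_distrib, ← mul_sum, hR]
  rw [sum_sum_card_eq_sum_card_filter_mem (triplets n) setD fun _ _ => filter_subset _ _,
    sum_sum_card_eq_sum_card_filter_mem (triplets n) setR1 fun _ _ => filter_subset _ _]
  ring

end RTree

theorem expected_parametric_triplet_distance'_general (n : ℕ)
    (p : ℝ)
    (X : Finset (Fin n)) (hX : X.card = 3) :
    (∑ T₁ : RTree n, ∑ T₂ : RTree n, RTree.pdist p T₁ T₂) /
        (Fintype.card (RTree n) : ℝ) ^ 2 =
      (n.choose 3 : ℝ) *
        (2 / 3 * rResProb n X ^ 2 +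
          2 * p * rResProb n X * (1 - rResProb n X)) := by
  have hsum : ∑ T₁ : RTree n, ∑ T₂ : RTree n, RTree.pdist p T₁ T₂ =
      n.choose 3 * (2 / 3 * (#{T : RTree n | T.Resolved X} : ℝ) ^ 2 +
        2 * p * #{T : RTree n | T.Resolved X} *
          (Fintype.card (RTree n) - #{T : RTree n | T.Resolved X})) := by
    rw [RTree.sum_sum_pdist_eq_sum_triplets, sum_congr rfl fun Y hY => by
      rw [RTree.card_filter_mem_setD_add_two_mul_card_filter_mem_setR1 hY p,
        RTree.card_filter_resolved_eq ((mem_powersetCard.1 hY).2.trans hX.symm)],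
      sum_const, triplets, card_powersetCard, card_univ, Fintype.card_fin, nsmul_eq_mul]
  rw [hsum, rResProb]
  rcases eq_or_ne (Fintype.card (RTree n) : ℝ) 0 with hN | hN
  · simp [hN]
  · field_simp

/-- **Lemma (expected parametric triplet distance).**  For `T₁`, `T₂` chosen
independently and uniformly at random from `RP(n)` and any `p ∈ [0,1]`,
`E(d⁽ᵖ⁾(T₁,T₂)) = C(n,3) · ( (2/3)·r'(n)² + 2·p·r'(n)·u'(n) )`, where
`u'(n) = 1 - r'(n)`. -/
theorem expected_parametric_triplet_distance' (n : ℕ) (hn : 3 ≤ n)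
    (p : ℝ) (hp0 : 0 ≤ p) (hp1 : p ≤ 1)
    (X : Finset (Fin n)) (hX : X.card = 3) :
    (∑ T₁ : RTree n, ∑ T₂ : RTree n, RTree.pdist p T₁ T₂) /
        (Fintype.card (RTree n) : ℝ) ^ 2 =
      (n.choose 3 : ℝ) *
        (2 / 3 * rResProb n X ^ 2 +
          2 * p * rResProb n X * (1 - rResProb n X)) :=
  expected_parametric_triplet_distance'_general n p X hX
end

section
/- For all n ≥ 1, r'(n) = r(n+1) and u'(n) = u(n+1): the probability that a fixed triplet is resolved (respectively unresolved) in a uniformly random rooted phylogeny over [n] equals the probability that a fixed quartet is resolved (respectively unresolved) in a uniformly random unrooted phylogeny over [n+1]. -/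
open Finset

attribute [local instance] Classical.propDecidable

/-!
Rooting an unrooted phylogeny over `n + 1` taxa at a leaf `p` is a bijection onto the rooted
phylogenies over the other `n` taxa: the clusters are the split sides avoiding `p`, and conversely
the splits of the unrooted tree are the clusters together with their complements. A triplet `X`
is resolved in the rooted tree iff the quartet `X ∪ {p}` is resolved in the unrooted one, because
a split side meets a quartet in exactly two taxa iff its complement does. Choosing the labelling
so that `X₃ ∪ {p}` becomes `X₄`, the bijection matches the two counts.
-/

theorem Finset.exists_equiv_map_eq {α β : Type*} [DecidableEq β] (e₀ : α ≃ β)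
    {s : Finset α} {t : Finset β} (h : s.card = t.card) :
    ∃ e : α ≃ β, s.map e.toEmbedding = t := by
  have := Set.powersetCard.isPretransitive (α := β) (n := t.card)
  obtain ⟨σ, hσ⟩ := MulAction.exists_smul_eq (Equiv.Perm β)
    (⟨s.map e₀.toEmbedding, (card_map _).trans h⟩ : Set.powersetCard β t.card) ⟨t, rfl⟩
  refine ⟨e₀.trans σ, ?_⟩
  simpa [smul_finset_def, map_eq_image, image_image] using congrArg Subtype.val hσ

section Splits

variable {α : Type*} [Fintype α] [DecidableEq α] {A B : Finset α}

def SplitCompatible (A B : Finset α) : Prop :=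
  A ⊆ B ∨ B ⊆ A ∨ A ∩ B = ∅ ∨ A ∪ B = univ

theorem splitCompatible_comm : SplitCompatible A B ↔ SplitCompatible B A := by
  unfold SplitCompatible
  rw [inter_comm, union_comm]
  tauto

theorem splitCompatible_compl_right : SplitCompatible A Bᶜ ↔ SplitCompatible A B := by
  have h₁ : A ⊆ Bᶜ ↔ A ∩ B = ∅ := by simp [subset_iff, Finset.ext_iff]
  have h₂ : Bᶜ ⊆ A ↔ A ∪ B = univ := by simp [subset_iff, Finset.ext_iff, or_iff_not_imp_right]
  have h₃ : A ∩ Bᶜ = ∅ ↔ A ⊆ B := by simp [subset_iff, Finset.ext_iff]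
  have h₄ : A ∪ Bᶜ = univ ↔ B ⊆ A := by simp [subset_iff, Finset.ext_iff, or_iff_not_imp_right]
  unfold SplitCompatible
  rw [h₁, h₂, h₃, h₄]
  tauto

theorem splitCompatible_compl_left : SplitCompatible Aᶜ B ↔ SplitCompatible A B := by
  rw [splitCompatible_comm, splitCompatible_compl_right, splitCompatible_comm]

theorem card_compl_inter_eq_two_iff {Q : Finset α} (hQ : Q.card = 4) :
    (Aᶜ ∩ Q).card = 2 ↔ (A ∩ Q).card = 2 := by
  have := card_sdiff_add_card_inter Q A
  rw [inter_comm, ← sdiff_eq_inter_compl, inter_comm]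
  omega

end Splits

namespace Rooting

variable {n : ℕ} (e : Option (Fin n) ≃ Fin (n + 1))

/-- Through `e`, the taxa of an unrooted tree over `Fin (n + 1)` are `Option (Fin n)`: `e none` is
the leaf at which the tree is rooted and `leafEmb e` places the taxa of the rooted tree. -/
def leafEmb : Fin n ↪ Fin (n + 1) := Function.Embedding.some.trans e.toEmbedding

variable {e}

theorem root_notMem_map (C : Finset (Fin n)) : e none ∉ C.map (leafEmb e) := by
  simp [leafEmb]

theorem map_univ : univ.map (leafEmb e) = {e none}ᶜ := by
  ext y
  obtain ⟨o, rfl⟩ := e.surjective y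
  cases o <;> simp [leafEmb]

theorem exists_map_eq_iff {A : Finset (Fin (n + 1))} :
    (∃ C : Finset (Fin n), C.map (leafEmb e) = A) ↔ e none ∉ A := by
  rw [← subset_compl_singleton, ← map_univ, subset_map_iff]
  simp [eq_comm]

theorem map_ne_compl_map (C D : Finset (Fin n)) :
    C.map (leafEmb e) ≠ (D.map (leafEmb e))ᶜ := fun h =>
  root_notMem_map C (h ▸ mem_compl.mpr (root_notMem_map D))

theorem card_map_inter_insert_root (C X : Finset (Fin n)) :
    (C.map (leafEmb e) ∩ insert (e none) (X.map (leafEmb e))).card = (C ∩ X).card := by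
  rw [inter_insert_of_notMem (root_notMem_map C), ← map_inter, card_map]

theorem map_insertNone (X : Finset (Fin n)) :
    (insertNone X).map e.toEmbedding = insert (e none) (X.map (leafEmb e)) := by
  ext y
  obtain ⟨o, rfl⟩ := e.surjective y
  cases o <;> simp [leafEmb]

theorem splitCompatible_map_iff {C D : Finset (Fin n)} :
    SplitCompatible (C.map (leafEmb e)) (D.map (leafEmb e)) ↔ C ⊆ D ∨ D ⊆ C ∨ C ∩ D = ∅ := by
  have hunion : (C ∪ D).map (leafEmb e) ≠ univ := fun h =>
    root_notMem_map (C ∪ D) (h ▸ mem_univ _)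
  rw [SplitCompatible, map_subset_map, map_subset_map, ← map_inter, map_eq_empty, ← map_union]
  tauto

variable (e) in
def unrootSplits (F : Finset (Finset (Fin n))) : Finset (Finset (Fin (n + 1))) :=
  F.image (·.map (leafEmb e)) ∪ F.image fun C => (C.map (leafEmb e))ᶜ

theorem mem_unrootSplits {F : Finset (Finset (Fin n))} {A : Finset (Fin (n + 1))} :
    A ∈ unrootSplits e F ↔ ∃ C ∈ F, C.map (leafEmb e) = A ∨ (C.map (leafEmb e))ᶜ = A := by
  simp only [unrootSplits, mem_union, mem_image]
  grind

variable (e) in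
def rootClusters (F : Finset (Finset (Fin (n + 1)))) : Finset (Finset (Fin n)) :=
  univ.filter fun C => C.map (leafEmb e) ∈ F

theorem mem_rootClusters {F : Finset (Finset (Fin (n + 1)))} {C : Finset (Fin n)} :
    C ∈ rootClusters e F ↔ C.map (leafEmb e) ∈ F := by
  simp [rootClusters]

end Rooting

section Unrooting

open Rooting

variable {n : ℕ} (e : Option (Fin n) ≃ Fin (n + 1))

def RTree.unroot (T : RTree n) : UTree (n + 1) where
  splits := unrootSplits e T.clusters
  empty_not_mem h := by
    obtain ⟨C, hC, h | h⟩ := mem_unrootSplits.mp h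
    · exact T.empty_not_mem (map_eq_empty.mp h ▸ hC)
    · exact root_notMem_map C ((compl_eq_empty_iff _).mp h ▸ mem_univ _)
  trivial_mem x := by
    refine Or.inr (mem_unrootSplits.mpr ?_)
    obtain ⟨o, rfl⟩ := e.surjective x
    cases o with
    | none => exact ⟨univ, T.univ_mem, Or.inr (by rw [map_univ, compl_compl])⟩
    | some x => exact ⟨{x}, T.singleton_mem x, Or.inl rfl⟩
  compl_mem A h := by
    rw [← compl_eq_univ_sdiff]
    obtain ⟨C, hC, rfl | rfl⟩ := mem_unrootSplits.mp h
    · exact mem_unrootSplits.mpr ⟨C, hC, Or.inr rfl⟩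
    · exact mem_unrootSplits.mpr ⟨C, hC, Or.inl (compl_compl _).symm⟩
  compat A hA B hB := by
    obtain ⟨C, hC, rfl | rfl⟩ := mem_unrootSplits.mp hA <;>
      obtain ⟨D, hD, rfl | rfl⟩ := mem_unrootSplits.mp hB <;>
      change SplitCompatible _ _ <;>
      simpa only [splitCompatible_compl_left, splitCompatible_compl_right,
        splitCompatible_map_iff] using T.laminar C hC D hD

def UTree.root [NeZero n] (T : UTree (n + 1)) : RTree n where
  clusters := rootClusters e T.splits
  univ_mem := by
    have hroot : {e none} ∈ T.splits := (T.trivial_mem (e none)).resolve_left fun h => by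
      have h0 := mem_univ (leafEmb e 0)
      rw [← h] at h0
      simp [leafEmb] at h0
    rw [mem_rootClusters, map_univ, compl_eq_univ_sdiff]
    exact T.compl_mem _ hroot
  singleton_mem x := by
    refine mem_rootClusters.mpr ((T.trivial_mem _).resolve_left fun h => ?_)
    exact root_notMem_map {x} (h ▸ mem_univ _)
  empty_not_mem h := T.empty_not_mem (by simpa using mem_rootClusters.mp h)
  laminar C hC D hD := splitCompatible_map_iff.mp
    (T.compat _ (mem_rootClusters.mp hC) _ (mem_rootClusters.mp hD))

theorem RTree.root_unroot [NeZero n] (T : RTree n) : (T.unroot e).root e = T := by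
  refine RTree.clusters_injective (ext fun C => ?_)
  change C ∈ rootClusters e (unrootSplits e T.clusters) ↔ C ∈ T.clusters
  simp only [mem_rootClusters, mem_unrootSplits, map_inj, (map_ne_compl_map C _).symm, or_false]
  exact ⟨fun ⟨D, hD, h⟩ => h ▸ hD, fun h => ⟨C, h, rfl⟩⟩

theorem UTree.unroot_root [NeZero n] (T : UTree (n + 1)) : (T.root e).unroot e = T := by
  refine UTree.splits_injective (ext fun A => ?_)
  change A ∈ unrootSplits e (rootClusters e T.splits) ↔ A ∈ T.splits
  simp only [mem_unrootSplits, mem_rootClusters]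
  constructor
  · rintro ⟨C, hC, rfl | rfl⟩
    · exact hC
    · simpa [compl_eq_univ_sdiff] using T.compl_mem _ hC
  · intro hA
    by_cases hroot : e none ∈ A
    · obtain ⟨C, hC⟩ := exists_map_eq_iff.mpr (notMem_compl.mpr hroot)
      refine ⟨C, ?_, Or.inr (by rw [hC, compl_compl])⟩
      simpa [hC, compl_eq_univ_sdiff] using T.compl_mem _ hA
    · obtain ⟨C, rfl⟩ := exists_map_eq_iff.mpr hroot
      exact ⟨C, hA, Or.inl rfl⟩

def unrootEquiv [NeZero n] : RTree n ≃ UTree (n + 1) where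
  toFun := RTree.unroot e
  invFun := UTree.root e
  left_inv := RTree.root_unroot e
  right_inv := UTree.unroot_root e

theorem RTree.resolved_unroot_iff (T : RTree n) {X : Finset (Fin n)} (hX : X.card = 3) :
    (T.unroot e).Resolved (insert (e none) (X.map (leafEmb e))) ↔ T.Resolved X := by
  have hQ : (insert (e none) (X.map (leafEmb e))).card = 4 := by
    rw [card_insert_of_notMem (root_notMem_map X), card_map, hX]
  change (∃ A ∈ unrootSplits e T.clusters, _) ↔ ∃ C ∈ T.clusters, _
  constructor
  · rintro ⟨A, hA, h⟩
    obtain ⟨C, hC, rfl | rfl⟩ := mem_unrootSplits.mp hA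
    · exact ⟨C, hC, by rwa [card_map_inter_insert_root] at h⟩
    · exact ⟨C, hC, by rwa [card_compl_inter_eq_two_iff hQ, card_map_inter_insert_root] at h⟩
  · rintro ⟨C, hC, h⟩
    exact ⟨_, mem_unrootSplits.mpr ⟨C, hC, Or.inl rfl⟩, by rwa [card_map_inter_insert_root]⟩

end Unrooting

theorem tripletProb_eq_quartetProb_general (n : ℕ)
    (X₃ : Finset (Fin n)) (hX₃ : X₃.card = 3)
    (X₄ : Finset (Fin (n + 1))) (hX₄ : X₄.card = 4) :
    rResProb n X₃ = uResProb (n + 1) X₄ ∧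
      1 - rResProb n X₃ = 1 - uResProb (n + 1) X₄ := by
  have : NeZero n := ⟨by have := card_le_univ X₃; simp only [hX₃, Fintype.card_fin] at this; omega⟩
  obtain ⟨e, he⟩ := exists_equiv_map_eq (finSuccEquiv n).symm (s := insertNone X₃) (t := X₄)
    (by rw [card_insertNone, hX₃, hX₄])
  rw [Rooting.map_insertNone] at he
  have hcount : (univ.filter fun T : RTree n => T.Resolved X₃).card =
      (univ.filter fun T : UTree (n + 1) => T.Resolved X₄).card :=
    card_equiv (unrootEquiv e) fun T => by simp [unrootEquiv, ← he, T.resolved_unroot_iff e hX₃]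
  have hprob : rResProb n X₃ = uResProb (n + 1) X₄ := by
    rw [rResProb, uResProb, hcount, Fintype.card_congr (unrootEquiv e)]
  exact ⟨hprob, by rw [hprob]⟩

/-- **Lemma.**  For all `n ≥ 1`, `r'(n) = r(n+1)` and `u'(n) = u(n+1)`: the
probability that a fixed triplet is resolved (resp. unresolved) in a uniformly
random rooted phylogeny over `[n]` equals the probability that a fixed quartet is
resolved (resp. unresolved) in a uniformly random unrooted phylogeny over `[n+1]`. -/
theorem tripletProb_eq_quartetProb (n : ℕ) (hn : 1 ≤ n)
    (X₃ : Finset (Fin n)) (hX₃ : X₃.card = 3)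
    (X₄ : Finset (Fin (n + 1))) (hX₄ : X₄.card = 4) :
    rResProb n X₃ = uResProb (n + 1) X₄ ∧
      1 - rResProb n X₃ = 1 - uResProb (n + 1) X₄ :=
  tripletProb_eq_quartetProb_general n X₃ hX₃ X₄ hX₄
end

section
/- For every p ∈ [1/2, 1], the parametric triplet (respectively quartet) distance d^(p) is a metric on the set of all rooted (respectively unrooted) phylogenies over a fixed taxon set: it is a distance measure and satisfies d^(p)(T1,T3) ≤ d^(p)(T1,T2) + d^(p)(T2,T3) for all trees T1, T2, T3. -/
open Finset

attribute [local instance] Classical.propDecidable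

/-!
Both distances are sums, over triplets (quartets), of a cost that depends only on whether the
element is resolved in each tree and on the two restrictions. The triangle inequality holds
termwise; its only nontrivial case, an element resolved in `T₁` and `T₃` but not in `T₂`,
costs `1 ≤ 2p`.

If the distance vanishes, every triplet `ab|e` (quartet `ab|cd`) displayed by `T₁` is
displayed by `T₂`. Fix `a` in a cluster `C` of `T₁`. For `b ∈ C` the smallest cluster of `T₂`
containing `a` and `b` lies inside every cluster of `T₂` displaying some `ab|e`, hence inside
`C`; these clusters all contain `a`, so they form a chain whose union, a cluster of `T₂`, is `C`.
For unrooted trees, root at a leaf `c` outside the split: the splits avoiding `c` form a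
laminar family and the quartets `ab|ce` play the role of the triplets `ab|e`.
-/
section Laminar

variable {α : Type*}

def IsLaminar (F : Finset (Finset α)) : Prop :=
  ∀ D ∈ F, ∀ E ∈ F, D ⊆ E ∨ E ⊆ D ∨ Disjoint D E

/-- For a cluster system, `Separates F {a, b} {e}` says that the tree displays the triplet
`ab|e`; for a split system, `Separates F {a, b} {c, d}` is the quartet `ab|cd`. -/
def Separates (F : Finset (Finset α)) (P Q : Finset α) : Prop :=
  ∃ D ∈ F, P ⊆ D ∧ Disjoint D Q

namespace IsLaminar

variable {F : Finset (Finset α)}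

theorem subset_or_subset (hF : IsLaminar F) {D E : Finset α} (hD : D ∈ F) (hE : E ∈ F)
    {x : α} (hxD : x ∈ D) (hxE : x ∈ E) : D ⊆ E ∨ E ⊆ D := by
  rcases hF D hD E hE with h | h | h
  · exact Or.inl h
  · exact Or.inr h
  · exact absurd hxE (Finset.disjoint_left.mp h hxD)

theorem exists_subset_of_separates [DecidableEq α] (hF : IsLaminar F) {C : Finset α} {a b : α}
    (hcover : ∃ D ∈ F, {a, b} ⊆ D) (hsep : ∀ e ∉ C, Separates F {a, b} {e}) :
    ∃ D ∈ F, {a, b} ⊆ D ∧ D ⊆ C := by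
  set S := F.filter ({a, b} ⊆ ·)
  have hS : S.Nonempty := by simpa [S, Finset.Nonempty] using hcover
  have hmin : S.inf' hS id ∈ S := by
    refine Finset.inf'_mem (S : Set (Finset α)) ?_ S hS id fun D hD => hD
    intro D hD E hE
    simp only [S, Finset.coe_filter, Set.mem_ofPred_eq] at hD hE ⊢
    have ha : a ∈ D := hD.2 (by simp)
    rcases hF.subset_or_subset hD.1 hE.1 ha (hE.2 (by simp)) with h | h
    · simpa [Finset.inf_eq_inter, Finset.inter_eq_left.mpr h] using hD
    · simpa [Finset.inf_eq_inter, Finset.inter_eq_right.mpr h] using hE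
  obtain ⟨hmF, hab⟩ := Finset.mem_filter.mp hmin
  refine ⟨_, hmF, hab, fun e he => ?_⟩
  by_contra heC
  obtain ⟨D, hD, habD, hDe⟩ := hsep e heC
  have hle : S.inf' hS id ⊆ D := Finset.inf'_le id (Finset.mem_filter.mpr ⟨hD, habD⟩)
  exact Finset.disjoint_singleton_right.mp hDe (hle he)

theorem mem_of_separates [DecidableEq α] (hF : IsLaminar F) {C : Finset α} {a : α} (ha : a ∈ C)
    (hcover : ∀ b ∈ C, ∃ D ∈ F, {a, b} ⊆ D)
    (hsep : ∀ b ∈ C, ∀ e ∉ C, Separates F {a, b} {e}) : C ∈ F := by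
  choose! m hmF hm hmC using fun b hb =>
    hF.exists_subset_of_separates (C := C) (hcover b hb) (hsep b hb)
  have hsup : C.sup' ⟨a, ha⟩ m = C :=
    le_antisymm (Finset.sup'_le _ _ hmC) fun b hb =>
      Finset.le_sup' m hb (hm b hb (by simp))
  have hmem : C.sup' ⟨a, ha⟩ m ∈ {D | D ∈ F ∧ a ∈ D} := by
    refine Finset.sup'_mem _ ?_ C _ m fun b hb => ⟨hmF b hb, hm b hb (by simp)⟩
    rintro D ⟨hD, haD⟩ E ⟨hE, haE⟩
    rcases hF.subset_or_subset hD hE haD haE with h | h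
    · simpa [Finset.sup_eq_union, Finset.union_eq_right.mpr h] using ⟨hE, haE⟩
    · simpa [Finset.sup_eq_union, Finset.union_eq_left.mpr h] using ⟨hD, haD⟩
  exact hsup ▸ hmem.1

end IsLaminar

end Laminar

section ParamDist

variable {ι σ β : Type*}

/-- The contribution of a single triplet or quartet to `d⁽ᵖ⁾`, given whether it is resolved
in each tree (`r₁`, `r₂`) and the two restrictions (`x`, `y`). -/
noncomputable def resolutionCost (p : ℝ) (r₁ r₂ : Prop) (x y : β) : ℝ :=
  (if r₁ ∧ r₂ ∧ x ≠ y then 1 else 0) +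
    p * ((if r₁ ∧ ¬r₂ then 1 else 0) + (if r₂ ∧ ¬r₁ then 1 else 0))

theorem resolutionCost_nonneg {p : ℝ} (hp : 0 ≤ p) (r₁ r₂ : Prop) (x y : β) :
    0 ≤ resolutionCost p r₁ r₂ x y := by
  unfold resolutionCost
  positivity

theorem resolutionCost_comm (p : ℝ) (r₁ r₂ : Prop) (x y : β) :
    resolutionCost p r₁ r₂ x y = resolutionCost p r₂ r₁ y x := by
  unfold resolutionCost
  by_cases r₁ <;> by_cases r₂ <;> by_cases x = y <;> simp_all [eq_comm]

theorem resolutionCost_self (p : ℝ) (r : Prop) (x : β) : resolutionCost p r r x x = 0 := by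
  simp [resolutionCost]

theorem resolutionCost_eq_zero {p : ℝ} (hp : 0 < p) {r₁ r₂ : Prop} {x y : β}
    (h : resolutionCost p r₁ r₂ x y = 0) (h₁ : r₁) : r₂ ∧ x = y := by
  unfold resolutionCost at h
  by_cases r₂ <;> by_cases x = y <;> simp_all

theorem resolutionCost_triangle {p : ℝ} (hp : 1 / 2 ≤ p) (r₁ r₂ r₃ : Prop) (x y z : β) :
    resolutionCost p r₁ r₃ x z ≤ resolutionCost p r₁ r₂ x y + resolutionCost p r₂ r₃ y z := by
  unfold resolutionCost
  by_cases r₁ <;> by_cases r₂ <;> by_cases r₃ <;> by_cases x = y <;> by_cases y = z <;>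
    by_cases x = z <;> simp_all <;> linarith

noncomputable def paramDist (p : ℝ) (Ω : Finset ι) (res : σ → ι → Prop) (restr : σ → ι → β)
    (s t : σ) : ℝ :=
  ∑ X ∈ Ω, resolutionCost p (res s X) (res t X) (restr s X) (restr t X)

variable {p : ℝ} {Ω : Finset ι} {res : σ → ι → Prop} {restr : σ → ι → β}

theorem paramDist_eq_card (p : ℝ) (Ω : Finset ι) (res : σ → ι → Prop) (restr : σ → ι → β)
    (s t : σ) :
    paramDist p Ω res restr s t =
      (Ω.filter fun X => res s X ∧ res t X ∧ restr s X ≠ restr t X).card +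
        p * ((Ω.filter fun X => res s X ∧ ¬res t X).card +
          (Ω.filter fun X => res t X ∧ ¬res s X).card) := by
  simp only [paramDist, resolutionCost, Finset.sum_add_distrib, ← Finset.mul_sum,
    Finset.natCast_card_filter]

theorem paramDist_nonneg (hp : 0 ≤ p) (s t : σ) : 0 ≤ paramDist p Ω res restr s t :=
  Finset.sum_nonneg fun _ _ => resolutionCost_nonneg hp _ _ _ _

theorem paramDist_comm (s t : σ) : paramDist p Ω res restr s t = paramDist p Ω res restr t s :=
  Finset.sum_congr rfl fun _ _ => resolutionCost_comm _ _ _ _ _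

theorem paramDist_self (s : σ) : paramDist p Ω res restr s s = 0 :=
  Finset.sum_eq_zero fun _ _ => resolutionCost_self _ _ _

theorem paramDist_triangle (hp : 1 / 2 ≤ p) (s t u : σ) :
    paramDist p Ω res restr s u ≤ paramDist p Ω res restr s t + paramDist p Ω res restr t u := by
  rw [paramDist, paramDist, paramDist, ← Finset.sum_add_distrib]
  exact Finset.sum_le_sum fun _ _ => resolutionCost_triangle hp _ _ _ _ _ _

theorem restr_eq_of_paramDist_eq_zero (hp : 0 < p) {s t : σ}
    (h : paramDist p Ω res restr s t = 0) {X : ι} (hX : X ∈ Ω) (hs : res s X) :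
    res t X ∧ restr s X = restr t X :=
  resolutionCost_eq_zero hp
    (((Finset.sum_eq_zero_iff_of_nonneg fun _ _ => resolutionCost_nonneg hp.le _ _ _ _).mp h)
      X hX) hs

end ParamDist

theorem inter_union_eq_left_iff {α : Type*} [DecidableEq α] {P Q D : Finset α}
    (hPQ : Disjoint P Q) :
    D ∩ (P ∪ Q) = P ↔ P ⊆ D ∧ Disjoint D Q := by
  constructor
  · intro h
    refine ⟨fun x hx => (Finset.mem_inter.mp (h ▸ hx)).1, Finset.disjoint_left.mpr ?_⟩
    intro x hxD hxQ
    have hxP : x ∈ P := h ▸ Finset.mem_inter.mpr ⟨hxD, Finset.mem_union_right P hxQ⟩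
    exact Finset.disjoint_left.mp hPQ hxP hxQ
  · rintro ⟨hPD, hDQ⟩
    rw [Finset.inter_union_distrib_left, Finset.inter_eq_right.mpr hPD,
      Finset.disjoint_iff_inter_eq_empty.mp hDQ, Finset.union_empty]

section Restriction

variable {n : ℕ} {F : Finset (Finset (Fin n))} {P Q : Finset (Fin n)}

theorem famResolved_of_separates (hP : P.card = 2) (hPQ : Disjoint P Q)
    (h : Separates F P Q) : famResolved F (P ∪ Q) := by
  obtain ⟨D, hD, hPD, hDQ⟩ := h
  exact ⟨D, hD, by rw [(inter_union_eq_left_iff hPQ).mpr ⟨hPD, hDQ⟩, hP]⟩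

theorem mem_famRestrict_iff_separates (hP : P.Nonempty) (hPQ : Disjoint P Q) :
    P ∈ famRestrict F (P ∪ Q) ↔ Separates F P Q := by
  simp [famRestrict, Separates, inter_union_eq_left_iff hPQ, hP.ne_empty]

theorem mem_famRestrictU_iff_separates (hP : P.Nonempty) (hQ : Q.Nonempty)
    (hPQ : Disjoint P Q) : P ∈ famRestrictU F (P ∪ Q) ↔ Separates F P Q := by
  obtain ⟨q, hq⟩ := hQ
  have hPX : P ≠ P ∪ Q := fun h =>
    Finset.disjoint_right.mp hPQ hq (h ▸ Finset.mem_union_right P hq)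
  simp [famRestrictU, Separates, inter_union_eq_left_iff hPQ, hP.ne_empty, hPX]

end Restriction

theorem famPdist_eq_paramDist {n : ℕ} (p : ℝ) (F G : Finset (Finset (Fin n))) :
    famPdist p F G = paramDist p (triplets n) famResolved famRestrict F G := by
  rw [paramDist_eq_card, famPdist, famSetD, famSetR1, famSetR2]
  -- the two sides differ only in their `Decidable` instances
  congr

namespace RTree

variable {n : ℕ} {p : ℝ}

theorem isLaminar (T : RTree n) : IsLaminar T.clusters := fun C hC D hD => by
  simpa only [Finset.disjoint_iff_inter_eq_empty] using T.laminar C hC D hD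

theorem clusters_subset_of_separates {T₁ T₂ : RTree n}
    (h : ∀ a b e : Fin n, Separates T₁.clusters {a, b} {e} → Separates T₂.clusters {a, b} {e}) :
    T₁.clusters ⊆ T₂.clusters := by
  intro C hC
  obtain ⟨a, ha⟩ := Finset.nonempty_iff_ne_empty.mpr fun h0 => T₁.empty_not_mem (h0 ▸ hC)
  refine T₂.isLaminar.mem_of_separates ha
    (fun b _ => ⟨Finset.univ, T₂.univ_mem, Finset.subset_univ _⟩)
    fun b hb e he =>
      h a b e ⟨C, hC, Finset.insert_subset ha (by simpa using hb), by simpa using he⟩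

theorem pdist_nonneg (hp : 0 ≤ p) (T₁ T₂ : RTree n) : 0 ≤ pdist p T₁ T₂ := by
  rw [pdist, famPdist_eq_paramDist]
  exact paramDist_nonneg hp _ _

theorem pdist_comm (p : ℝ) (T₁ T₂ : RTree n) : pdist p T₁ T₂ = pdist p T₂ T₁ := by
  simp only [pdist, famPdist_eq_paramDist, paramDist_comm]

theorem pdist_triangle (hp : 1 / 2 ≤ p) (T₁ T₂ T₃ : RTree n) :
    pdist p T₁ T₃ ≤ pdist p T₁ T₂ + pdist p T₂ T₃ := by
  simp only [pdist, famPdist_eq_paramDist]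
  exact paramDist_triangle hp _ _ _

theorem separates_of_pdist_eq_zero (hp : 0 < p) {T₁ T₂ : RTree n} (h : pdist p T₁ T₂ = 0)
    {a b e : Fin n} (hsep : Separates T₁.clusters {a, b} {e}) :
    Separates T₂.clusters {a, b} {e} := by
  have hPQ : Disjoint ({a, b} : Finset (Fin n)) {e} := by
    obtain ⟨D, -, habD, hDe⟩ := hsep
    exact hDe.mono_left habD
  by_cases hab : a = b
  · subst hab
    exact ⟨{a}, T₂.singleton_mem a, by simp, by simpa using hPQ⟩
  have hX : {a, b} ∪ {e} ∈ triplets n := by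
    rw [triplets, Finset.mem_powersetCard, Finset.card_union_of_disjoint hPQ,
      Finset.card_pair hab, Finset.card_singleton]
    exact ⟨Finset.subset_univ _, rfl⟩
  obtain ⟨-, hrestr⟩ := restr_eq_of_paramDist_eq_zero hp
    ((famPdist_eq_paramDist p _ _).symm.trans h) hX
    (famResolved_of_separates (Finset.card_pair hab) hPQ hsep)
  rw [← mem_famRestrict_iff_separates (by simp) hPQ, ← hrestr,
    mem_famRestrict_iff_separates (by simp) hPQ]
  exact hsep

theorem pdist_eq_zero_iff (hp : 0 < p) {T₁ T₂ : RTree n} : pdist p T₁ T₂ = 0 ↔ T₁ = T₂ := by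
  refine ⟨fun h => clusters_injective (Finset.Subset.antisymm ?_ ?_), ?_⟩
  · exact clusters_subset_of_separates fun _ _ _ => separates_of_pdist_eq_zero hp h
  · exact clusters_subset_of_separates fun _ _ _ =>
      separates_of_pdist_eq_zero hp ((pdist_comm p T₂ T₁).trans h)
  · rintro rfl
    exact (famPdist_eq_paramDist p _ _).trans (paramDist_self _)

end RTree

theorem famPdistU_eq_paramDist {n : ℕ} (p : ℝ) (F G : Finset (Finset (Fin n))) :
    famPdistU p F G = paramDist p (quartets n) famResolvedU famRestrictU F G := by
  rw [paramDist_eq_card, famPdistU, famSetDU, famSetR1U, famSetR2U]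
  congr

namespace UTree

variable {n : ℕ} {p : ℝ}

theorem isLaminar_filter_not_mem (T : UTree n) (c : Fin n) :
    IsLaminar (T.splits.filter (c ∉ ·)) := by
  intro A hA B hB
  rw [Finset.mem_filter] at hA hB
  rcases T.compat A hA.1 B hB.1 with h | h | h | h
  · exact Or.inl h
  · exact Or.inr (Or.inl h)
  · exact Or.inr (Or.inr (Finset.disjoint_iff_inter_eq_empty.mpr h))
  · exact absurd (h ▸ Finset.mem_univ c) (by simp [hA.2, hB.2])

theorem singleton_mem_of_ne (T : UTree n) {x y : Fin n} (hxy : x ≠ y) : {x} ∈ T.splits :=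
  (T.trivial_mem x).resolve_left fun hx =>
    hxy (Finset.mem_singleton.mp (hx ▸ Finset.mem_univ y)).symm

theorem separates_of_eq_or_eq (T : UTree n) {a b c d : Fin n} (hdeg : a = b ∨ c = d)
    (hPQ : Disjoint ({a, b} : Finset (Fin n)) {c, d}) : Separates T.splits {a, b} {c, d} := by
  have hac : a ≠ c := fun h =>
    Finset.disjoint_left.mp hPQ (Finset.mem_insert_self a _) (by simp [h])
  rcases hdeg with rfl | rfl
  · exact ⟨{a}, T.singleton_mem_of_ne hac, by simp, by simpa using hPQ⟩
  · refine ⟨Finset.univ \ {c}, T.compl_mem _ (T.singleton_mem_of_ne hac.symm), ?_, by simp⟩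
    simpa [Finset.subset_sdiff] using hPQ

theorem splits_subset_of_separates {T₁ T₂ : UTree n}
    (h : ∀ a b c d : Fin n,
      Separates T₁.splits {a, b} {c, d} → Separates T₂.splits {a, b} {c, d}) :
    T₁.splits ⊆ T₂.splits := by
  intro A hA
  obtain ⟨a, ha⟩ := Finset.nonempty_iff_ne_empty.mpr fun h0 => T₁.empty_not_mem (h0 ▸ hA)
  obtain ⟨c, hc⟩ : ∃ c, c ∉ A := by
    by_contra! hAU
    have := T₁.compl_mem A hA
    rw [Finset.eq_univ_of_forall hAU, Finset.sdiff_self] at this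
    exact T₁.empty_not_mem this
  have hsep₁ : ∀ b ∈ A, ∀ e ∉ A, Separates T₁.splits {a, b} {c, e} := fun b hb e he =>
    ⟨A, hA, Finset.insert_subset ha (by simpa using hb), by simp [hc, he]⟩
  have hsep₂ : ∀ b ∈ A, ∀ e ∉ A, ∃ D ∈ T₂.splits.filter (c ∉ ·), {a, b} ⊆ D ∧ e ∉ D :=
    fun b hb e he => by
      obtain ⟨D, hD, habD, hDce⟩ := h a b c e (hsep₁ b hb e he)
      rw [Finset.disjoint_insert_right, Finset.disjoint_singleton_right] at hDce
      exact ⟨D, Finset.mem_filter.mpr ⟨hD, hDce.1⟩, habD, hDce.2⟩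
  refine (Finset.mem_filter.mp ((T₂.isLaminar_filter_not_mem c).mem_of_separates ha
    (fun b hb => ?_) fun b hb e he => ?_)).1
  · obtain ⟨D, hD, habD, -⟩ := hsep₂ b hb c hc
    exact ⟨D, hD, habD⟩
  · obtain ⟨D, hD, habD, heD⟩ := hsep₂ b hb e he
    exact ⟨D, hD, habD, by simpa using heD⟩

theorem pdist_nonneg (hp : 0 ≤ p) (T₁ T₂ : UTree n) : 0 ≤ pdist p T₁ T₂ := by
  rw [pdist, famPdistU_eq_paramDist]
  exact paramDist_nonneg hp _ _

theorem pdist_comm (p : ℝ) (T₁ T₂ : UTree n) : pdist p T₁ T₂ = pdist p T₂ T₁ := by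
  simp only [pdist, famPdistU_eq_paramDist, paramDist_comm]

theorem pdist_triangle (hp : 1 / 2 ≤ p) (T₁ T₂ T₃ : UTree n) :
    pdist p T₁ T₃ ≤ pdist p T₁ T₂ + pdist p T₂ T₃ := by
  simp only [pdist, famPdistU_eq_paramDist]
  exact paramDist_triangle hp _ _ _

theorem separates_of_pdist_eq_zero (hp : 0 < p) {T₁ T₂ : UTree n} (h : pdist p T₁ T₂ = 0)
    {a b c d : Fin n} (hsep : Separates T₁.splits {a, b} {c, d}) :
    Separates T₂.splits {a, b} {c, d} := by
  have hPQ : Disjoint ({a, b} : Finset (Fin n)) {c, d} := by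
    obtain ⟨D, -, habD, hDcd⟩ := hsep
    exact hDcd.mono_left habD
  by_cases hdeg : a = b ∨ c = d
  · exact T₂.separates_of_eq_or_eq hdeg hPQ
  rw [not_or] at hdeg
  have hX : {a, b} ∪ {c, d} ∈ quartets n := by
    rw [quartets, Finset.mem_powersetCard, Finset.card_union_of_disjoint hPQ,
      Finset.card_pair hdeg.1, Finset.card_pair hdeg.2]
    exact ⟨Finset.subset_univ _, rfl⟩
  obtain ⟨-, hrestr⟩ := restr_eq_of_paramDist_eq_zero hp
    ((famPdistU_eq_paramDist p _ _).symm.trans h) hX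
    -- `famResolvedU` has the same definition as `famResolved`
    (famResolved_of_separates (Finset.card_pair hdeg.1) hPQ hsep)
  rw [← mem_famRestrictU_iff_separates (by simp) (by simp) hPQ, ← hrestr,
    mem_famRestrictU_iff_separates (by simp) (by simp) hPQ]
  exact hsep

theorem pdist_eq_zero_iff (hp : 0 < p) {T₁ T₂ : UTree n} : pdist p T₁ T₂ = 0 ↔ T₁ = T₂ := by
  refine ⟨fun h => splits_injective (Finset.Subset.antisymm ?_ ?_), ?_⟩
  · exact splits_subset_of_separates fun _ _ _ _ => separates_of_pdist_eq_zero hp h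
  · exact splits_subset_of_separates fun _ _ _ _ =>
      separates_of_pdist_eq_zero hp ((pdist_comm p T₂ T₁).trans h)
  · rintro rfl
    exact (famPdistU_eq_paramDist p _ _).trans (paramDist_self _)

end UTree

theorem pdist_metric_general (n : ℕ) (p : ℝ) (hp0 : 1 / 2 ≤ p) :
    ((∀ T₁ T₂ : RTree n,
        0 ≤ RTree.pdist p T₁ T₂ ∧ RTree.pdist p T₁ T₂ = RTree.pdist p T₂ T₁ ∧
          (RTree.pdist p T₁ T₂ = 0 ↔ T₁ = T₂)) ∧
      ∀ T₁ T₂ T₃ : RTree n,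
        RTree.pdist p T₁ T₃ ≤ RTree.pdist p T₁ T₂ + RTree.pdist p T₂ T₃) ∧
    (∀ T₁ T₂ : UTree n,
        0 ≤ UTree.pdist p T₁ T₂ ∧ UTree.pdist p T₁ T₂ = UTree.pdist p T₂ T₁ ∧
          (UTree.pdist p T₁ T₂ = 0 ↔ T₁ = T₂)) ∧
      ∀ T₁ T₂ T₃ : UTree n,
        UTree.pdist p T₁ T₃ ≤ UTree.pdist p T₁ T₂ + UTree.pdist p T₂ T₃ := by
  have hp : 0 < p := by linarith
  exact ⟨⟨fun T₁ T₂ => ⟨RTree.pdist_nonneg hp.le T₁ T₂, RTree.pdist_comm p T₁ T₂,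
      RTree.pdist_eq_zero_iff hp⟩, RTree.pdist_triangle hp0⟩,
    ⟨fun T₁ T₂ => ⟨UTree.pdist_nonneg hp.le T₁ T₂, UTree.pdist_comm p T₁ T₂,
      UTree.pdist_eq_zero_iff hp⟩, UTree.pdist_triangle hp0⟩⟩

/-- **Theorem (part (iii)).**  For every `p ∈ [1/2, 1]`, the parametric triplet
(resp. quartet) distance `d⁽ᵖ⁾` is a metric on the set of all rooted
(resp. unrooted) phylogenies over a fixed taxon set: it is a distance measure
(nonnegative, symmetric, vanishing exactly on equal pairs) and it satisfies the
triangle inequality. -/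
theorem pdist_metric (n : ℕ) (p : ℝ) (hp0 : 1 / 2 ≤ p) (hp1 : p ≤ 1) :
    ((∀ T₁ T₂ : RTree n,
        0 ≤ RTree.pdist p T₁ T₂ ∧ RTree.pdist p T₁ T₂ = RTree.pdist p T₂ T₁ ∧
          (RTree.pdist p T₁ T₂ = 0 ↔ T₁ = T₂)) ∧
      ∀ T₁ T₂ T₃ : RTree n,
        RTree.pdist p T₁ T₃ ≤ RTree.pdist p T₁ T₂ + RTree.pdist p T₂ T₃) ∧
    (∀ T₁ T₂ : UTree n,
        0 ≤ UTree.pdist p T₁ T₂ ∧ UTree.pdist p T₁ T₂ = UTree.pdist p T₂ T₁ ∧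
          (UTree.pdist p T₁ T₂ = 0 ↔ T₁ = T₂)) ∧
      ∀ T₁ T₂ T₃ : UTree n,
        UTree.pdist p T₁ T₃ ≤ UTree.pdist p T₁ T₂ + UTree.pdist p T₂ T₃ :=
  pdist_metric_general n p hp0
end
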